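/- arXiv:0903.1594 — 9 statements merged into one kernel-verified Lean document; each statement's English description precedes it below -/
import Mathlib

section
/- Let L : ℝⁿ × ℝⁿ × Ω → ℝ be continuous, stationary, strictly convex and superlinear in v, and let x : [0,∞) → ℝⁿ be a globally Lipschitz curve with x(0) = 0. Fix ω₀ ∈ Ω. Any weak-* sublimit μ (along T_j → ∞) of the occupation measures μ_T defined by ∫ φ dμ_T = (1/T) ∫₀^T φ(ẋ(t), τ_{x(t)} ω₀) dt on ℝⁿ × Ω is a probability measure satisfying the holonomy condition ∫ v · D_x φ(0, ω) dμ(v, ω) = 0 for every stationary φ ∈ C¹_s(ℝⁿ × Ω) that is bounded. -/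
/-!
Along the trajectory, `⟪ẋ t, Dφ (τ_{x t} ω₀)⟫` is the a.e. derivative of the bounded Lipschitz
function `t ↦ φ (x t) ω₀`, so by the fundamental theorem of calculus its averages over `(0, T]`
are `O(1/T)`. Since `‖ẋ‖ ≤ K`, the occupation measures, hence also `μ`, live on the compact set
`closedBall 0 K × Ω`; there the unbounded integrand `⟪v, Dφ ω⟫` agrees with a bounded continuous
test function, so its `μ`-integral is the limit of those averages, namely `0`.
-/

open Filter MeasureTheory Set Topology Metric
open scoped RealInnerProductSpace NNReal BoundedContinuousFunction CompactlySupported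

theorem LipschitzWith.integral_eq_sub_of_ae_hasDerivAt {ψ g : ℝ → ℝ} {K : ℝ≥0}
    (hψ : LipschitzWith K ψ) (hg : ∀ᵐ t, HasDerivAt ψ (g t) t) (a b : ℝ) :
    ∫ t in a..b, g t = ψ b - ψ a := by
  rw [← (hψ.lipschitzOnWith (s := uIcc a b)).absolutelyContinuousOnInterval.integral_deriv_eq_sub]
  refine intervalIntegral.integral_congr_ae ?_
  filter_upwards [hg] with t ht _ using ht.deriv.symm

theorem LipschitzWith.tendsto_inv_mul_integral_of_ae_hasDerivAt {ψ g : ℝ → ℝ} {K : ℝ≥0} {B : ℝ}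
    (hψ : LipschitzWith K ψ) (hB : ∀ t, |ψ t| ≤ B) (hg : ∀ᵐ t, HasDerivAt ψ (g t) t)
    {ι : Type*} {l : Filter ι} {T : ι → ℝ} (hT : Tendsto T l atTop) :
    Tendsto (fun j => (T j)⁻¹ * ∫ t in Ioc 0 (T j), g t) l (𝓝 0) := by
  refine squeeze_zero_norm' ?_ (by simpa using hT.inv_tendsto_atTop.mul_const (2 * B))
  · filter_upwards [hT.eventually_ge_atTop 0] with j hj
    rw [← intervalIntegral.integral_of_le hj, hψ.integral_eq_sub_of_ae_hasDerivAt hg,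
      norm_mul, norm_inv, Real.norm_of_nonneg hj, Real.norm_eq_abs]
    gcongr
    linarith [abs_sub (ψ (T j)) (ψ 0), hB (T j), hB 0]

section Stationary

variable {E Ω : Type*} [NormedAddCommGroup E] [InnerProductSpace ℝ E] [CompleteSpace E]
  {τ : E → Ω → Ω} {φ : E → Ω → ℝ} {Dφ : Ω → E}

theorem hasGradientAt_of_stationary (hφ : ∀ a y ω, φ (a + y) ω = φ a (τ y ω))
    (hD : ∀ ω, HasGradientAt (fun a => φ a ω) (Dφ ω) 0) (ω : Ω) (y : E) :
    HasGradientAt (fun a => φ a ω) (Dφ (τ y ω)) y := by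
  have htrans : (fun a => φ a ω) = fun a => φ (a - y) (τ y ω) := by
    funext a
    rw [← hφ, sub_add_cancel]
  rw [htrans, hasGradientAt_iff_hasFDerivAt]
  have h0 := (hD (τ y ω)).hasFDerivAt
  rw [← sub_self y] at h0
  have h := h0.comp (f := (· - y)) y (hasFDerivAt_sub_const y)
  rwa [ContinuousLinearMap.comp_id] at h

theorem lipschitzWith_of_stationary (hφ : ∀ a y ω, φ (a + y) ω = φ a (τ y ω))
    (hD : ∀ ω, HasGradientAt (fun a => φ a ω) (Dφ ω) 0) {C : ℝ≥0} (hC : ∀ ω, ‖Dφ ω‖₊ ≤ C)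
    (ω : Ω) : LipschitzWith C (fun a => φ a ω) := by
  rw [← lipschitzOnWith_univ]
  refine convex_univ.lipschitzOnWith_of_nnnorm_hasFDerivWithin_le
    (fun y _ => (hasGradientAt_of_stationary hφ hD ω y).hasFDerivAt.hasFDerivWithinAt)
    fun y _ => ?_
  simpa using hC (τ y ω)

end Stationary

theorem BoundedContinuousFunction.exists_eqOn_of_isCompact {X : Type*} [TopologicalSpace X]
    [RegularSpace X] [LocallyCompactSpace X] {h : X → ℝ} (hh : Continuous h) {k : Set X}
    (hk : IsCompact k) : ∃ F : X →ᵇ ℝ, EqOn F h k := by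
  obtain ⟨χ, hχ, -, hχc, -⟩ := exists_continuous_one_zero_of_isCompact hk isClosed_empty
    (disjoint_empty k)
  let F : C_c(X, ℝ) := ⟨⟨fun q => χ q * h q, χ.continuous.mul hh⟩, hχc.mul_right⟩
  refine ⟨F.toBoundedContinuousFunction, fun q hq => ?_⟩
  simp [F, hχ hq]

def IsOccupationLimit {X : Type*} [TopologicalSpace X] [MeasurableSpace X] (γ : ℝ → X)
    (T : ℕ → ℝ) (μ : Measure X) : Prop :=
  ∀ f : X →ᵇ ℝ, Tendsto (fun j => (T j)⁻¹ * ∫ t in Ioc 0 (T j), f (γ t)) atTop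
    (𝓝 (∫ q, f q ∂μ))

namespace IsOccupationLimit

variable {X : Type*} [MeasurableSpace X] {γ : ℝ → X} {T : ℕ → ℝ} {μ : Measure X} {s : Set X}

theorem tendsto_of_eqOn [TopologicalSpace X] (hμ : IsOccupationLimit γ T μ) {h : X → ℝ}
    (F : X →ᵇ ℝ) (hF : EqOn F h s) (hγ : ∀ᵐ t, γ t ∈ s) (hs : ∀ᵐ q ∂μ, q ∈ s) :
    Tendsto (fun j => (T j)⁻¹ * ∫ t in Ioc 0 (T j), h (γ t)) atTop (𝓝 (∫ q, h q ∂μ)) := by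
  have hγF : ∀ j, ∫ t in Ioc 0 (T j), F (γ t) = ∫ t in Ioc 0 (T j), h (γ t) := fun j =>
    integral_congr_ae (ae_restrict_of_ae (hγ.mono fun t ht => hF ht))
  rw [← integral_congr_ae (hs.mono fun q hq => hF hq)]
  simpa only [hγF] using hμ F

theorem ae_mem [PseudoMetricSpace X] [OpensMeasurableSpace X] [IsFiniteMeasure μ]
    (hμ : IsOccupationLimit γ T μ) (hs : IsClosed s) (hγ : ∀ᵐ t, γ t ∈ s) :
    ∀ᵐ q ∂μ, q ∈ s := by
  obtain ⟨t₀, ht₀⟩ := hγ.exists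
  have hne : s.Nonempty := ⟨γ t₀, ht₀⟩
  let f : X →ᵇ ℝ := .ofNormedAddCommGroup (fun q => min 1 (infDist q s))
    (continuous_const.min (continuous_infDist_pt s)) 1 fun q => by
      rw [Real.norm_of_nonneg (le_min zero_le_one infDist_nonneg)]
      exact min_le_left _ _
  have hf_nonneg : 0 ≤ ⇑f := fun q => le_min zero_le_one infDist_nonneg
  have hfγ : ∀ j, ∫ t in Ioc 0 (T j), f (γ t) = 0 := fun j =>
    integral_eq_zero_of_ae <| ae_restrict_of_ae <| hγ.mono fun t ht => by
      simp [f, infDist_zero_of_mem ht]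
  have hf : ∫ q, f q ∂μ = 0 :=
    tendsto_nhds_unique (hμ f) (by simp only [hfγ, mul_zero, tendsto_const_nhds])
  filter_upwards [(integral_eq_zero_iff_of_nonneg hf_nonneg (f.integrable μ)).1 hf] with q hq
  rw [hs.mem_iff_infDist_zero hne]
  exact (min_eq_iff.1 hq).resolve_left (fun h => one_ne_zero h.1) |>.1

end IsOccupationLimit

theorem stmt_5_general {n : ℕ} {Ω : Type*} [MetricSpace Ω] [CompactSpace Ω]
    [MeasurableSpace Ω] [BorelSpace Ω]
    (τ : EuclideanSpace ℝ (Fin n) → Ω → Ω)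
    (K : NNReal) (x : ℝ → EuclideanSpace ℝ (Fin n)) (hx : LipschitzWith K x)
    (x' : ℝ → EuclideanSpace ℝ (Fin n))
    (hx' : ∀ᵐ t ∂(volume : Measure ℝ), HasDerivAt x (x' t) t)
    (ω₀ : Ω) (T : ℕ → ℝ) (hT : Tendsto T atTop atTop)
    (μ : Measure (EuclideanSpace ℝ (Fin n) × Ω)) [IsProbabilityMeasure μ]
    (hconv : ∀ f : BoundedContinuousFunction (EuclideanSpace ℝ (Fin n) × Ω) ℝ,
      Tendsto (fun j => (T j)⁻¹ * ∫ t in Set.Ioc (0 : ℝ) (T j), f (x' t, τ (x t) ω₀))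
        atTop (nhds (∫ q, f q ∂μ))) :
    ∀ (φ : EuclideanSpace ℝ (Fin n) → Ω → ℝ) (Dφ : Ω → EuclideanSpace ℝ (Fin n)),
      (∀ a y ω, φ (a + y) ω = φ a (τ y ω)) →
      (∀ ω, Continuous fun a => φ a ω) →
      (∀ a, Continuous (φ a)) →
      Continuous Dφ →
      (∀ ω, HasGradientAt (fun a => φ a ω) (Dφ ω) 0) →
      (∃ B, ∀ a ω, |φ a ω| ≤ B) →
      ∫ q, (⟪q.1, Dφ q.2⟫) ∂μ = 0 := by
  intro φ Dφ hφ _ _ hDφc hD ⟨B, hB⟩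
  have hμ : IsOccupationLimit (fun t => (x' t, τ (x t) ω₀)) T μ := hconv
  have hs : IsCompact (closedBall (0 : EuclideanSpace ℝ (Fin n)) K ×ˢ (univ : Set Ω)) :=
    (isCompact_closedBall 0 K).prod isCompact_univ
  have hγs : ∀ᵐ t, (x' t, τ (x t) ω₀) ∈ closedBall 0 K ×ˢ univ := by
    filter_upwards [hx'] with t ht
    exact ⟨mem_closedBall_zero_iff.2 (ht.le_of_lipschitz hx), mem_univ _⟩
  obtain ⟨F, hF⟩ := BoundedContinuousFunction.exists_eqOn_of_isCompact
    (h := fun q => ⟪q.1, Dφ q.2⟫) (by fun_prop) hs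
  have hlim := hμ.tendsto_of_eqOn F hF hγs (hμ.ae_mem hs.isClosed hγs)
  obtain ⟨C, hC⟩ := (isCompact_range (continuous_nnnorm.comp hDφc)).bddAbove
  have hψ := (lipschitzWith_of_stationary hφ hD (fun ω => hC (mem_range_self ω)) ω₀).comp hx
  have hψ' : ∀ᵐ t, HasDerivAt (fun t => φ (x t) ω₀) ⟪x' t, Dφ (τ (x t) ω₀)⟫ t := by
    filter_upwards [hx'] with t ht
    have h := (hasGradientAt_of_stationary hφ hD ω₀ (x t)).hasFDerivAt.comp_hasDerivAt t ht
    rwa [InnerProductSpace.toDual_apply_apply, real_inner_comm] at h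
  exact tendsto_nhds_unique hlim
    (hψ.tendsto_inv_mul_integral_of_ae_hasDerivAt (fun t => hB _ _) hψ' hT)

/-- Any weak-* sublimit of the occupation measures of a globally Lipschitz
trajectory is a probability measure satisfying the holonomy condition
holonomy for all bounded stationary `φ ∈ C¹_s(ℝⁿ × Ω)`. -/
theorem stmt_5 {n : ℕ} {Ω : Type*} [MetricSpace Ω] [CompactSpace Ω]
    [MeasurableSpace Ω] [BorelSpace Ω]
    (L : EuclideanSpace ℝ (Fin n) → EuclideanSpace ℝ (Fin n) → Ω → ℝ)
    (hLcont : Continuous fun q : EuclideanSpace ℝ (Fin n) ×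
      EuclideanSpace ℝ (Fin n) × Ω => L q.1 q.2.1 q.2.2)
    (τ : EuclideanSpace ℝ (Fin n) → Ω → Ω)
    (hτcont : Continuous fun q : EuclideanSpace ℝ (Fin n) × Ω => τ q.1 q.2)
    (hadd : ∀ x y ω, τ (x + y) ω = τ x (τ y ω)) (hzero : ∀ ω, τ 0 ω = ω)
    (hLstat : ∀ x y v ω, L (x + y) v ω = L x v (τ y ω))
    (hLconv : ∀ x ω, StrictConvexOn ℝ Set.univ fun v => L x v ω)
    (hLsuper : ∀ (x : EuclideanSpace ℝ (Fin n)) (ω : Ω) (c : ℝ), ∃ b : ℝ,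
      ∀ v, c * ‖v‖ - b ≤ L x v ω)
    (K : NNReal) (x : ℝ → EuclideanSpace ℝ (Fin n)) (hx : LipschitzWith K x)
    (hx0 : x 0 = 0)
    (x' : ℝ → EuclideanSpace ℝ (Fin n))
    (hx' : ∀ᵐ t ∂(volume : Measure ℝ), HasDerivAt x (x' t) t)
    (ω₀ : Ω) (T : ℕ → ℝ) (hT : Tendsto T atTop atTop)
    (μ : Measure (EuclideanSpace ℝ (Fin n) × Ω)) [IsProbabilityMeasure μ]
    (hconv : ∀ f : BoundedContinuousFunction (EuclideanSpace ℝ (Fin n) × Ω) ℝ,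
      Tendsto (fun j => (T j)⁻¹ * ∫ t in Set.Ioc (0 : ℝ) (T j), f (x' t, τ (x t) ω₀))
        atTop (nhds (∫ q, f q ∂μ))) :
    ∀ (φ : EuclideanSpace ℝ (Fin n) → Ω → ℝ) (Dφ : Ω → EuclideanSpace ℝ (Fin n)),
      (∀ a y ω, φ (a + y) ω = φ a (τ y ω)) →
      (∀ ω, Continuous fun a => φ a ω) →
      (∀ a, Continuous (φ a)) →
      Continuous Dφ →
      (∀ ω, HasGradientAt (fun a => φ a ω) (Dφ ω) 0) →
      (∃ B, ∀ a ω, |φ a ω| ≤ B) →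
      ∫ q, (⟪q.1, Dφ q.2⟫) ∂μ = 0 :=
  stmt_5_general τ K x hx x' hx' ω₀ T hT μ hconv
end

section
/- Let H(x, p, ω) = sup_{v ∈ ℝⁿ} (−p·v − L(x, v, ω)) be the Hamiltonian associated to a Lagrangian L that is continuous, superlinear in v, and stationary. If u : ℝⁿ × Ω → ℝ is stationary, continuous in ω, and is a viscosity solution in x of H(0, D_x u(0, ω), ω) + α u(0, ω) = λ for every ω, then u is also a viscosity solution in ω: for every φ ∈ C¹_s(ℝⁿ × Ω) and every ω₀ ∈ Ω at which u(0, ·) − φ(0, ·) attains a local minimum (resp. maximum) with value 0, one has H(0, D_x φ(0, ω₀), ω₀) + α φ(0, ω₀) ≥ λ (resp. ≤ λ). -/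
/-!
By stationarity, `u x ω₀ - φ x ω₀ = (u 0 - φ 0) (τ x ω₀)`, and `x ↦ τ x ω₀` is continuous
with value `ω₀` at `x = 0`. Hence a local extremum of `u 0 - φ 0` at `ω₀` pulls back to a local
extremum of `x ↦ u x ω₀ - φ x ω₀` at `0`, where the viscosity inequalities in `x` apply.
-/

open scoped RealInnerProductSpace

section Stationary

variable {E Ω β : Type*} [AddZeroClass E]

def IsStationaryFun (τ : E → Ω → Ω) (f : E → Ω → β) : Prop :=
  ∀ x y ω, f (x + y) ω = f x (τ y ω)

variable {τ : E → Ω → Ω} {f g : E → Ω → β}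

theorem IsStationaryFun.apply_eq_apply_zero (hf : IsStationaryFun τ f) (x : E) (ω : Ω) :
    f x ω = f 0 (τ x ω) := by
  simpa using hf 0 x ω

theorem IsStationaryFun.sub [Sub β] (hf : IsStationaryFun τ f) (hg : IsStationaryFun τ g) :
    IsStationaryFun τ fun x ω => f x ω - g x ω := fun x y ω =>
  congrArg₂ (· - ·) (hf x y ω) (hg x y ω)

variable [TopologicalSpace E] [TopologicalSpace Ω] [Preorder β] {ω₀ : Ω}

theorem IsStationaryFun.isLocalMin_orbit (hf : IsStationaryFun τ f)
    (hτ : ContinuousAt (τ · ω₀) 0) (hτ₀ : τ 0 ω₀ = ω₀) (hmin : IsLocalMin (f 0) ω₀) :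
    IsLocalMin (f · ω₀) 0 := by
  have hmin' : IsLocalMin (f 0) (τ 0 ω₀) := by rwa [hτ₀]
  simpa only [Function.comp_def, ← hf.apply_eq_apply_zero] using
    hmin'.comp_continuous (g := (τ · ω₀)) hτ

theorem IsStationaryFun.isLocalMax_orbit (hf : IsStationaryFun τ f)
    (hτ : ContinuousAt (τ · ω₀) 0) (hτ₀ : τ 0 ω₀ = ω₀) (hmax : IsLocalMax (f 0) ω₀) :
    IsLocalMax (f · ω₀) 0 := by
  have hmax' : IsLocalMax (f 0) (τ 0 ω₀) := by rwa [hτ₀]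
  simpa only [Function.comp_def, ← hf.apply_eq_apply_zero] using
    hmax'.comp_continuous (g := (τ · ω₀)) hτ

end Stationary

theorem stmt_6_general {n : ℕ} {Ω : Type*} [MetricSpace Ω]
    (τ : EuclideanSpace ℝ (Fin n) → Ω → Ω)
    (hτcont : Continuous fun q : EuclideanSpace ℝ (Fin n) × Ω => τ q.1 q.2)
    (hzero : ∀ ω, τ 0 ω = ω)
    (H : EuclideanSpace ℝ (Fin n) → EuclideanSpace ℝ (Fin n) → Ω → ℝ)
    (α lam : ℝ)
    (u : EuclideanSpace ℝ (Fin n) → Ω → ℝ)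
    (hustat : ∀ x y ω, u (x + y) ω = u x (τ y ω))
    -- viscosity supersolution in x
    (hviscx_min : ∀ (ω₀ : Ω) (ψ : EuclideanSpace ℝ (Fin n) → ℝ)
      (gψ : EuclideanSpace ℝ (Fin n) → EuclideanSpace ℝ (Fin n)),
      ContDiff ℝ 1 ψ → (∀ a, HasGradientAt ψ (gψ a) a) →
      ∀ x₀, IsLocalMin (fun a => u a ω₀ - ψ a) x₀ → u x₀ ω₀ - ψ x₀ = 0 →
        lam ≤ H x₀ (gψ x₀) ω₀ + α * ψ x₀)
    -- viscosity subsolution in x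
    (hviscx_max : ∀ (ω₀ : Ω) (ψ : EuclideanSpace ℝ (Fin n) → ℝ)
      (gψ : EuclideanSpace ℝ (Fin n) → EuclideanSpace ℝ (Fin n)),
      ContDiff ℝ 1 ψ → (∀ a, HasGradientAt ψ (gψ a) a) →
      ∀ x₀, IsLocalMax (fun a => u a ω₀ - ψ a) x₀ → u x₀ ω₀ - ψ x₀ = 0 →
        H x₀ (gψ x₀) ω₀ + α * ψ x₀ ≤ lam) :
    -- conclusion: viscosity solution in ω
    ∀ (φ : EuclideanSpace ℝ (Fin n) → Ω → ℝ)
      (Dφ : EuclideanSpace ℝ (Fin n) → Ω → EuclideanSpace ℝ (Fin n)),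
      (∀ x y ω, φ (x + y) ω = φ x (τ y ω)) →
      (∀ x, Continuous (φ x)) →
      (∀ ω, ContDiff ℝ 1 fun a => φ a ω) →
      (∀ ω a, HasGradientAt (fun a' => φ a' ω) (Dφ a ω) a) →
      Continuous (fun ω => Dφ 0 ω) →
      ∀ ω₀ : Ω,
        (IsLocalMin (fun ω => u 0 ω - φ 0 ω) ω₀ → u 0 ω₀ - φ 0 ω₀ = 0 →
          lam ≤ H 0 (Dφ 0 ω₀) ω₀ + α * φ 0 ω₀) ∧
        (IsLocalMax (fun ω => u 0 ω - φ 0 ω) ω₀ → u 0 ω₀ - φ 0 ω₀ = 0 →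
          H 0 (Dφ 0 ω₀) ω₀ + α * φ 0 ω₀ ≤ lam) := by
  intro φ Dφ hφstat _ hφC1 hφgrad _ ω₀
  have hdiff : IsStationaryFun τ fun x ω => u x ω - φ x ω :=
    IsStationaryFun.sub hustat hφstat
  have hτ : ContinuousAt (τ · ω₀) 0 :=
    (hτcont.comp (continuous_id.prodMk continuous_const)).continuousAt
  exact
    ⟨fun hmin hval => hviscx_min ω₀ _ _ (hφC1 ω₀) (hφgrad ω₀) 0
        (hdiff.isLocalMin_orbit hτ (hzero ω₀) hmin) hval,
      fun hmax hval => hviscx_max ω₀ _ _ (hφC1 ω₀) (hφgrad ω₀) 0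
        (hdiff.isLocalMax_orbit hτ (hzero ω₀) hmax) hval⟩

/-- A stationary function, continuous in `ω`, which is a viscosity solution in
`x` of `H(0, D_x u(0,ω), ω) + α u(0,ω) = λ`, is also a viscosity solution in
`ω`. -/
theorem stmt_6 {n : ℕ} {Ω : Type*} [MetricSpace Ω] [CompactSpace Ω]
    (τ : EuclideanSpace ℝ (Fin n) → Ω → Ω)
    (hτcont : Continuous fun q : EuclideanSpace ℝ (Fin n) × Ω => τ q.1 q.2)
    (hadd : ∀ x y ω, τ (x + y) ω = τ x (τ y ω)) (hzero : ∀ ω, τ 0 ω = ω)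
    (L : EuclideanSpace ℝ (Fin n) → EuclideanSpace ℝ (Fin n) → Ω → ℝ)
    (hLcont : Continuous fun q : EuclideanSpace ℝ (Fin n) ×
      EuclideanSpace ℝ (Fin n) × Ω => L q.1 q.2.1 q.2.2)
    (hLstat : ∀ x y v ω, L (x + y) v ω = L x v (τ y ω))
    (hLsuper : ∀ (x : EuclideanSpace ℝ (Fin n)) (ω : Ω) (c : ℝ), ∃ b : ℝ,
      ∀ v, c * ‖v‖ - b ≤ L x v ω)
    (H : EuclideanSpace ℝ (Fin n) → EuclideanSpace ℝ (Fin n) → Ω → ℝ)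
    (hH : ∀ x pvec ω, H x pvec ω = sSup (Set.range fun v => -⟪pvec, v⟫ - L x v ω))
    (α lam : ℝ)
    (u : EuclideanSpace ℝ (Fin n) → Ω → ℝ)
    (hustat : ∀ x y ω, u (x + y) ω = u x (τ y ω))
    (hucontω : ∀ x, Continuous (u x))
    (hucontx : ∀ ω, Continuous fun a => u a ω)
    -- viscosity supersolution in x
    (hviscx_min : ∀ (ω₀ : Ω) (ψ : EuclideanSpace ℝ (Fin n) → ℝ)
      (gψ : EuclideanSpace ℝ (Fin n) → EuclideanSpace ℝ (Fin n)),
      ContDiff ℝ 1 ψ → (∀ a, HasGradientAt ψ (gψ a) a) →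
      ∀ x₀, IsLocalMin (fun a => u a ω₀ - ψ a) x₀ → u x₀ ω₀ - ψ x₀ = 0 →
        lam ≤ H x₀ (gψ x₀) ω₀ + α * ψ x₀)
    -- viscosity subsolution in x
    (hviscx_max : ∀ (ω₀ : Ω) (ψ : EuclideanSpace ℝ (Fin n) → ℝ)
      (gψ : EuclideanSpace ℝ (Fin n) → EuclideanSpace ℝ (Fin n)),
      ContDiff ℝ 1 ψ → (∀ a, HasGradientAt ψ (gψ a) a) →
      ∀ x₀, IsLocalMax (fun a => u a ω₀ - ψ a) x₀ → u x₀ ω₀ - ψ x₀ = 0 →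
        H x₀ (gψ x₀) ω₀ + α * ψ x₀ ≤ lam) :
    -- conclusion: viscosity solution in ω
    ∀ (φ : EuclideanSpace ℝ (Fin n) → Ω → ℝ)
      (Dφ : EuclideanSpace ℝ (Fin n) → Ω → EuclideanSpace ℝ (Fin n)),
      (∀ x y ω, φ (x + y) ω = φ x (τ y ω)) →
      (∀ x, Continuous (φ x)) →
      (∀ ω, ContDiff ℝ 1 fun a => φ a ω) →
      (∀ ω a, HasGradientAt (fun a' => φ a' ω) (Dφ a ω) a) →
      Continuous (fun ω => Dφ 0 ω) →
      ∀ ω₀ : Ω,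
        (IsLocalMin (fun ω => u 0 ω - φ 0 ω) ω₀ → u 0 ω₀ - φ 0 ω₀ = 0 →
          lam ≤ H 0 (Dφ 0 ω₀) ω₀ + α * φ 0 ω₀) ∧
        (IsLocalMax (fun ω => u 0 ω - φ 0 ω) ω₀ → u 0 ω₀ - φ 0 ω₀ = 0 →
          H 0 (Dφ 0 ω₀) ω₀ + α * φ 0 ω₀ ≤ lam) :=
  stmt_6_general τ hτcont hzero H α lam u hustat hviscx_min hviscx_max
end

section
/- Suppose that for each ω ∈ Ω and each α > 0, u_α(·, ω) is Lipschitz in x with a Lipschitz constant C independent of α and ω, u_α is stationary, α u_α is uniformly bounded, and u_α(0, ·) is Lipschitz in ω with constant K/α. Assume further that the action τ is uniformly transitive, and that α u_α(0, ω) → ξ(ω) pointwise as α → 0. Then ξ is constant on Ω. -/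
open Filter Topology Set

/-! Translating `ω₁` by `z` costs `C ‖z‖` through the `x`-Lipschitz bound, and `u_α(0, τ z ω₁)` lies
within `K / α · dist (τ z ω₁) ω₂` of `u_α(0, ω₂)`. After multiplying by `α` and letting `α → 0`,
only `|ξ ω₁ - ξ ω₂| ≤ K · dist (τ z ω₁) ω₂` survives; since the orbit of `ω₁` is dense, the
right-hand side can be made arbitrarily small. -/

theorem abs_sub_le_of_stationary {E Ω : Type*} [SeminormedAddGroup E] [PseudoMetricSpace Ω]
    (τ : E → Ω → Ω) (v : E → Ω → ℝ) {C L : ℝ}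
    (hLipx : ∀ x₁ x₂ ω, |v x₁ ω - v x₂ ω| ≤ C * ‖x₁ - x₂‖)
    (hstat : ∀ x y ω, v (x + y) ω = v x (τ y ω))
    (hLipω : ∀ ω₁ ω₂, |v 0 ω₁ - v 0 ω₂| ≤ L * dist ω₁ ω₂) (z : E) (ω₁ ω₂ : Ω) :
    |v 0 ω₁ - v 0 ω₂| ≤ C * ‖z‖ + L * dist (τ z ω₁) ω₂ := by
  have htranslate : |v 0 ω₁ - v 0 (τ z ω₁)| ≤ C * ‖z‖ := by
    simpa [← hstat 0 z ω₁] using hLipx 0 z ω₁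
  calc |v 0 ω₁ - v 0 ω₂| ≤ |v 0 ω₁ - v 0 (τ z ω₁)| + |v 0 (τ z ω₁) - v 0 ω₂| :=
        abs_sub_le _ _ _
    _ ≤ C * ‖z‖ + L * dist (τ z ω₁) ω₂ := add_le_add htranslate (hLipω _ _)

theorem abs_sub_le_of_tendsto_nhdsGT {f g : ℝ → ℝ} {a b c d : ℝ}
    (hf : Tendsto f (𝓝[>] 0) (𝓝 a)) (hg : Tendsto g (𝓝[>] 0) (𝓝 b))
    (hfg : ∀ α > 0, |f α - g α| ≤ α * c + d) : |a - b| ≤ d := by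
  have hbound : Tendsto (fun α => α * c + d) (𝓝[>] 0) (𝓝 (0 * c + d)) :=
    ((continuous_id.mul continuous_const).add continuous_const).tendsto 0 |>.mono_left
      nhdsWithin_le_nhds
  simpa using le_of_tendsto_of_tendsto (hf.sub hg).abs hbound
    (eventually_nhdsWithin_of_forall hfg)

theorem mem_closure_range_of_uniformly_transitive {E Ω : Type*} [Norm E] [PseudoMetricSpace Ω]
    {τ : E → Ω → Ω}
    (htrans : ∀ ε > (0:ℝ), ∃ M > (0:ℝ), ∀ ω₁ ω₂ : Ω, ∃ z : E, ‖z‖ < M ∧ dist (τ z ω₁) ω₂ < ε)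
    (ω₁ ω₂ : Ω) : ω₂ ∈ closure (range fun z => τ z ω₁) := by
  refine Metric.mem_closure_iff.2 fun ε hε => ?_
  obtain ⟨_, _, hM⟩ := htrans ε hε
  obtain ⟨z, -, hz⟩ := hM ω₁ ω₂
  exact ⟨τ z ω₁, mem_range_self z, by rwa [dist_comm]⟩

theorem stmt_8_general {n : ℕ} {Ω : Type*} [MetricSpace Ω]
    (τ : EuclideanSpace ℝ (Fin n) → Ω → Ω)
    (u : ℝ → EuclideanSpace ℝ (Fin n) → Ω → ℝ)
    (C K : ℝ)
    (hLipx : ∀ α > (0:ℝ), ∀ (x₁ x₂ : EuclideanSpace ℝ (Fin n)) (ω : Ω),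
      |u α x₁ ω - u α x₂ ω| ≤ C * ‖x₁ - x₂‖)
    (hstat : ∀ α > (0:ℝ), ∀ (x y : EuclideanSpace ℝ (Fin n)) (ω : Ω),
      u α (x + y) ω = u α x (τ y ω))
    (hLipω : ∀ α > (0:ℝ), ∀ ω₁ ω₂ : Ω,
      |u α 0 ω₁ - u α 0 ω₂| ≤ (K / α) * dist ω₁ ω₂)
    (htrans : ∀ ε > (0:ℝ), ∃ M > (0:ℝ), ∀ ω₁ ω₂ : Ω,
      ∃ z : EuclideanSpace ℝ (Fin n), ‖z‖ < M ∧ dist (τ z ω₁) ω₂ < ε)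
    (ξ : Ω → ℝ)
    (hlim : ∀ ω, Tendsto (fun α => α * u α 0 ω)
      (nhdsWithin 0 (Set.Ioi (0:ℝ))) (nhds (ξ ω))) :
    ∀ ω₁ ω₂ : Ω, ξ ω₁ = ξ ω₂ := by
  intro ω₁ ω₂
  have horbit : ∀ z, |ξ ω₁ - ξ ω₂| ≤ K * dist (τ z ω₁) ω₂ := fun z =>
    abs_sub_le_of_tendsto_nhdsGT (hlim ω₁) (hlim ω₂) fun α hα => calc
      |α * u α 0 ω₁ - α * u α 0 ω₂| = α * |u α 0 ω₁ - u α 0 ω₂| := by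
          rw [← mul_sub, abs_mul, abs_of_pos hα]
      _ ≤ α * (C * ‖z‖ + K / α * dist (τ z ω₁) ω₂) :=
          mul_le_mul_of_nonneg_left (abs_sub_le_of_stationary τ (u α) (hLipx α hα)
            (hstat α hα) (hLipω α hα) z ω₁ ω₂) hα.le
      _ = α * (C * ‖z‖) + K * dist (τ z ω₁) ω₂ := by field_simp
  have hclosed : IsClosed {ω | |ξ ω₁ - ξ ω₂| ≤ K * dist ω ω₂} :=
    isClosed_le continuous_const (continuous_const.mul (continuous_id.dist continuous_const))
  have hω₂ := hclosed.closure_subset_iff.2 (range_subset_iff.2 horbit)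
    (mem_closure_range_of_uniformly_transitive htrans ω₁ ω₂)
  simpa [sub_eq_zero] using hω₂

/-- If `u_α` is uniformly Lipschitz in `x`, stationary, `α u_α` is uniformly
bounded, `u_α(0,·)` is `(K/α)`-Lipschitz in `ω`, the action is uniformly
transitive, and `α u_α(0, ω) → ξ(ω)` pointwise as `α → 0⁺`, then `ξ` is
constant on `Ω`. -/
theorem stmt_8 {n : ℕ} {Ω : Type*} [MetricSpace Ω] [CompactSpace Ω]
    (τ : EuclideanSpace ℝ (Fin n) → Ω → Ω)
    (hτcont : Continuous fun q : EuclideanSpace ℝ (Fin n) × Ω => τ q.1 q.2)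
    (hadd : ∀ x y ω, τ (x + y) ω = τ x (τ y ω)) (hzero : ∀ ω, τ 0 ω = ω)
    (u : ℝ → EuclideanSpace ℝ (Fin n) → Ω → ℝ)
    (C K B : ℝ)
    (hLipx : ∀ α > (0:ℝ), ∀ (x₁ x₂ : EuclideanSpace ℝ (Fin n)) (ω : Ω),
      |u α x₁ ω - u α x₂ ω| ≤ C * ‖x₁ - x₂‖)
    (hstat : ∀ α > (0:ℝ), ∀ (x y : EuclideanSpace ℝ (Fin n)) (ω : Ω),
      u α (x + y) ω = u α x (τ y ω))
    (hbd : ∀ α > (0:ℝ), ∀ ω : Ω, |α * u α 0 ω| ≤ B)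
    (hLipω : ∀ α > (0:ℝ), ∀ ω₁ ω₂ : Ω,
      |u α 0 ω₁ - u α 0 ω₂| ≤ (K / α) * dist ω₁ ω₂)
    (htrans : ∀ ε > (0:ℝ), ∃ M > (0:ℝ), ∀ ω₁ ω₂ : Ω,
      ∃ z : EuclideanSpace ℝ (Fin n), ‖z‖ < M ∧ dist (τ z ω₁) ω₂ < ε)
    (ξ : Ω → ℝ)
    (hlim : ∀ ω, Tendsto (fun α => α * u α 0 ω)
      (nhdsWithin 0 (Set.Ioi (0:ℝ))) (nhds (ξ ω))) :
    ∀ ω₁ ω₂ : Ω, ξ ω₁ = ξ ω₂ :=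
  stmt_8_general τ u C K hLipx hstat hLipω htrans ξ hlim
end

section
/- Let L(0, v, ω) be continuous, nonnegative, and strictly convex in v for each ω, and let μ be a probability measure on ℝⁿ × Ω minimizing ∫ L(0, v, ω) dμ over all probability measures satisfying a set of linear constraints in v (the discounted holonomy constraints). Then μ is supported on a graph: there exists a measurable function V : Ω → ℝⁿ such that μ-almost every (v, ω) satisfies v = V(ω). Specifically, defining V(ω) as the conditional barycenter of v given ω, the measure obtained by pushing forward along (v, ω) ↦ (V(ω), ω) satisfies the same linear constraints and has strictly smaller action unless v = V(ω) μ-a.e. -/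
/-!
Disintegrate `μ` along `ω` and let `V ω` be the barycenter of the conditional law of `v`.
The constraints are affine in `v`, so pushing the `ω`-marginal of `μ` onto the graph of `V`
preserves them, while Jensen's inequality on each fiber shows that this does not increase the
action. Minimality of `μ` therefore forces equality in Jensen's inequality on almost every
fiber, and strict convexity makes almost every conditional law the Dirac mass at `V ω`.
-/

open MeasureTheory
open scoped RealInnerProductSpace

theorem StrictConvexOn.ae_eq_integral_of_integral_le {E : Type*} [NormedAddCommGroup E]
    [NormedSpace ℝ E] [CompleteSpace E] [MeasurableSpace E] {ν : Measure E}
    [IsProbabilityMeasure ν] {g : E → ℝ} (hg : StrictConvexOn ℝ Set.univ g) (hgc : Continuous g)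
    (hid : Integrable id ν) (hgi : Integrable g ν) (hle : ∫ v, g v ∂ν ≤ g (∫ v, v ∂ν)) :
    ∀ᵐ v ∂ν, v = ∫ v, v ∂ν := by
  rcases hg.ae_eq_const_or_map_average_lt hgc.continuousOn isClosed_univ
      (.of_forall fun _ => Set.mem_univ _) hid hgi with hconst | hlt
  · filter_upwards [hconst] with v hv
    simpa [average_eq_integral] using hv
  · simp only [average_eq_integral, id] at hlt
    exact absurd hle hlt.not_ge

theorem MeasureTheory.Integrable.map_swap {E Ω F : Type*} [MeasurableSpace E]
    [MeasurableSpace Ω] [NormedAddCommGroup F] {μ : Measure (E × Ω)} {f : E × Ω → F}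
    (hf : Integrable f μ) : Integrable (fun p : Ω × E => f p.swap) (μ.map Prod.swap) :=
  (integrable_map_equiv MeasurableEquiv.prodComm _).2 hf

theorem MeasureTheory.integrable_inner_add_of_continuous {E Ω : Type*} [NormedAddCommGroup E]
    [InnerProductSpace ℝ E] [SecondCountableTopology E] [MeasurableSpace E] [BorelSpace E]
    [TopologicalSpace Ω] [CompactSpace Ω] [MeasurableSpace Ω] [OpensMeasurableSpace Ω]
    {μ : Measure (E × Ω)} [IsFiniteMeasure μ] {a : Ω → E} {c : Ω → ℝ} (ha : Continuous a)
    (hc : Continuous c) (hv : Integrable Prod.fst μ) :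
    Integrable (fun q => ⟪a q.2, q.1⟫ + c q.2) μ := by
  obtain ⟨Ca, hCa⟩ := isCompact_univ.exists_bound_of_continuousOn ha.continuousOn
  obtain ⟨Cc, hCc⟩ := isCompact_univ.exists_bound_of_continuousOn hc.continuousOn
  have hm : Measurable fun q : E × Ω => ⟪a q.2, q.1⟫ + c q.2 :=
    ((ha.measurable.comp measurable_snd).inner measurable_fst).add
      (hc.measurable.comp measurable_snd)
  refine ((hv.norm.const_mul Ca).add (integrable_const Cc)).mono' hm.aestronglyMeasurable
    (.of_forall fun q => ?_)
  calc ‖⟪a q.2, q.1⟫ + c q.2‖ ≤ ‖a q.2‖ * ‖q.1‖ + ‖c q.2‖ :=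
        (norm_add_le _ _).trans (add_le_add_left (norm_inner_le_norm _ _) _)
    _ ≤ Ca * ‖q.1‖ + Cc := by
        gcongr
        exacts [hCa _ (Set.mem_univ _), hCc _ (Set.mem_univ _)]

namespace MeasureTheory.Measure

section FiberKernel

variable {E Ω : Type*} [MeasurableSpace E] [StandardBorelSpace E] [Nonempty E]
  [MeasurableSpace Ω] (μ : Measure (E × Ω)) [IsFiniteMeasure μ]

noncomputable def fiberKernel : ProbabilityTheory.Kernel Ω E :=
  (μ.map Prod.swap).condKernel

instance : ProbabilityTheory.IsMarkovKernel μ.fiberKernel := by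
  unfold fiberKernel; infer_instance

variable {μ}

theorem ae_of_ae_fiberKernel {p : E × Ω → Prop} (hp : MeasurableSet {q | p q})
    (h : ∀ᵐ ω ∂μ.snd, ∀ᵐ v ∂μ.fiberKernel ω, p (v, ω)) : ∀ᵐ q ∂μ, p q := by
  have hs : MeasurableSet {q : Ω × E | p q.swap} := hp.preimage measurable_swap
  have hswap : ∀ᵐ q ∂μ.map Prod.swap, p q.swap := by
    rw [← (μ.map Prod.swap).disintegrate (μ.map Prod.swap).condKernel, ae_compProd_iff hs]
    simpa [fiberKernel] using h
  simpa using ae_of_ae_map measurable_swap.aemeasurable hswap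

variable {F : Type*} [NormedAddCommGroup F] {f : E × Ω → F}

theorem ae_integrable_fiberKernel (hf : Integrable f μ) :
    ∀ᵐ ω ∂μ.snd, Integrable (fun v => f (v, ω)) (μ.fiberKernel ω) := by
  simpa [fiberKernel] using hf.map_swap.condKernel_ae

variable [NormedSpace ℝ F]

theorem integrable_integral_fiberKernel (hf : Integrable f μ) :
    Integrable (fun ω => ∫ v, f (v, ω) ∂μ.fiberKernel ω) μ.snd := by
  simpa [fiberKernel] using hf.map_swap.integral_condKernel

theorem integral_eq_integral_integral_fiberKernel (hf : Integrable f μ) :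
    ∫ q, f q ∂μ = ∫ ω, ∫ v, f (v, ω) ∂μ.fiberKernel ω ∂μ.snd := by
  calc ∫ q, f q ∂μ = ∫ p, f p.swap ∂μ.map Prod.swap :=
        (integral_map_equiv MeasurableEquiv.prodComm fun p : Ω × E => f p.swap).symm
    _ = _ := by simpa [fiberKernel] using (integral_condKernel hf.map_swap).symm

end FiberKernel

section GraphMeasure

variable {E Ω : Type*} [NormedAddCommGroup E] [NormedSpace ℝ E] [CompleteSpace E]
  [SecondCountableTopology E] [MeasurableSpace E] [BorelSpace E] [MeasurableSpace Ω]
  (μ : Measure (E × Ω)) [IsFiniteMeasure μ]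

noncomputable def condBarycenter (ω : Ω) : E :=
  ∫ v, v ∂μ.fiberKernel ω

noncomputable def graphMeasure : Measure (E × Ω) :=
  μ.snd.map fun ω => (μ.condBarycenter ω, ω)

theorem measurable_condBarycenter : Measurable μ.condBarycenter :=
  (measurable_snd.stronglyMeasurable.integral_kernel_prod_right'
    (κ := μ.fiberKernel) (f := fun p : Ω × E => p.2)).measurable

theorem measurable_graph_condBarycenter : Measurable fun ω => (μ.condBarycenter ω, ω) :=
  μ.measurable_condBarycenter.prodMk measurable_id

instance [IsProbabilityMeasure μ] : IsProbabilityMeasure μ.graphMeasure :=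
  isProbabilityMeasure_map μ.measurable_graph_condBarycenter.aemeasurable

variable {μ} {F : Type*} [NormedAddCommGroup F] {f : E × Ω → F}

theorem integrable_graphMeasure_iff (hf : AEStronglyMeasurable f μ.graphMeasure) :
    Integrable f μ.graphMeasure ↔ Integrable (fun ω => f (μ.condBarycenter ω, ω)) μ.snd :=
  integrable_map_measure hf μ.measurable_graph_condBarycenter.aemeasurable

theorem integral_graphMeasure [NormedSpace ℝ F] (hf : AEStronglyMeasurable f μ.graphMeasure) :
    ∫ q, f q ∂μ.graphMeasure = ∫ ω, f (μ.condBarycenter ω, ω) ∂μ.snd :=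
  integral_map μ.measurable_graph_condBarycenter.aemeasurable hf

theorem integrable_fst_graphMeasure (hv : Integrable Prod.fst μ) :
    Integrable Prod.fst μ.graphMeasure :=
  (integrable_graphMeasure_iff measurable_fst.aestronglyMeasurable).2
    (integrable_integral_fiberKernel hv)

variable {L : E → Ω → ℝ}

theorem ae_map_condBarycenter_le_integral_fiberKernel (hL : ∀ ω, ConvexOn ℝ Set.univ fun v => L v ω)
    (hLc : ∀ ω, Continuous fun v => L v ω) (hv : Integrable Prod.fst μ)
    (hLμ : Integrable (fun q => L q.1 q.2) μ) :
    ∀ᵐ ω ∂μ.snd, L (μ.condBarycenter ω) ω ≤ ∫ v, L v ω ∂μ.fiberKernel ω := by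
  filter_upwards [ae_integrable_fiberKernel hv, ae_integrable_fiberKernel hLμ] with ω hvω hLω
  exact (hL ω).map_integral_le (hLc ω).continuousOn isClosed_univ
    (.of_forall fun _ => Set.mem_univ _) hvω hLω

theorem integrable_graphMeasure_of_nonneg (hL0 : ∀ v ω, 0 ≤ L v ω)
    (hL : ∀ ω, ConvexOn ℝ Set.univ fun v => L v ω) (hLc : ∀ ω, Continuous fun v => L v ω)
    (hLm : Measurable fun q : E × Ω => L q.1 q.2) (hv : Integrable Prod.fst μ)
    (hLμ : Integrable (fun q => L q.1 q.2) μ) :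
    Integrable (fun q => L q.1 q.2) μ.graphMeasure := by
  refine (integrable_graphMeasure_iff hLm.aestronglyMeasurable).2 <|
    (integrable_integral_fiberKernel hLμ).mono'
      (hLm.comp μ.measurable_graph_condBarycenter).aestronglyMeasurable ?_
  filter_upwards [ae_map_condBarycenter_le_integral_fiberKernel hL hLc hv hLμ] with ω hω
  rwa [Real.norm_of_nonneg (hL0 _ _)]

theorem ae_fst_eq_condBarycenter_of_integral_le
    (hL : ∀ ω, StrictConvexOn ℝ Set.univ fun v => L v ω) (hLc : ∀ ω, Continuous fun v => L v ω)
    (hLm : Measurable fun q : E × Ω => L q.1 q.2) (hv : Integrable Prod.fst μ)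
    (hLμ : Integrable (fun q => L q.1 q.2) μ)
    (hLgraph : Integrable (fun q => L q.1 q.2) μ.graphMeasure)
    (hle : ∫ q, L q.1 q.2 ∂μ ≤ ∫ q, L q.1 q.2 ∂μ.graphMeasure) :
    ∀ᵐ q ∂μ, q.1 = μ.condBarycenter q.2 := by
  have hjensen :=
    ae_map_condBarycenter_le_integral_fiberKernel (fun ω => (hL ω).convexOn) hLc hv hLμ
  have hLV := (integrable_graphMeasure_iff hLm.aestronglyMeasurable).1 hLgraph
  rw [integral_eq_integral_integral_fiberKernel hLμ,
    integral_graphMeasure hLm.aestronglyMeasurable] at hle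
  have hgap := (integral_eq_iff_of_ae_le hLV (integrable_integral_fiberKernel hLμ) hjensen).1
    (le_antisymm (integral_mono_ae hLV (integrable_integral_fiberKernel hLμ) hjensen) hle)
  refine ae_of_ae_fiberKernel
    (measurableSet_eq_fun measurable_fst (μ.measurable_condBarycenter.comp measurable_snd)) ?_
  filter_upwards [ae_integrable_fiberKernel hv, ae_integrable_fiberKernel hLμ, hgap]
    with ω hvω hLω hω
  exact (hL ω).ae_eq_integral_of_integral_le (hLc ω) hvω hLω hω.ge

end GraphMeasure

theorem integral_graphMeasure_inner_add {E Ω : Type*} [NormedAddCommGroup E]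
    [InnerProductSpace ℝ E] [CompleteSpace E] [SecondCountableTopology E] [MeasurableSpace E]
    [BorelSpace E] [MeasurableSpace Ω] {μ : Measure (E × Ω)} [IsFiniteMeasure μ] {a : Ω → E}
    {c : Ω → ℝ} (ha : Measurable a) (hc : Measurable c)
    (hv : Integrable Prod.fst μ) (hint : Integrable (fun q => ⟪a q.2, q.1⟫ + c q.2) μ) :
    ∫ q, (⟪a q.2, q.1⟫ + c q.2) ∂μ.graphMeasure = ∫ q, (⟪a q.2, q.1⟫ + c q.2) ∂μ := by
  have hm : Measurable fun q : E × Ω => ⟪a q.2, q.1⟫ + c q.2 :=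
    ((ha.comp measurable_snd).inner measurable_fst).add (hc.comp measurable_snd)
  rw [integral_graphMeasure hm.aestronglyMeasurable, integral_eq_integral_integral_fiberKernel hint]
  refine integral_congr_ae ?_
  filter_upwards [ae_integrable_fiberKernel hv] with ω hvω
  have hinner : Integrable (fun v => ⟪a ω, v⟫) (μ.fiberKernel ω) :=
    ((innerSL ℝ (a ω)).integrable_comp hvω :)
  simp [integral_add hinner (integrable_const _), integral_inner hvω, condBarycenter]

end MeasureTheory.Measure

/-- A probability measure minimizing the action `∫ L(0,v,ω) dμ` among all
probability measures satisfying a family of constraints affine in `v` (the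
discounted holonomy constraints) is supported on a graph `v = V(ω)` for some
measurable `V : Ω → ℝⁿ`. -/
theorem stmt_9 {n : ℕ} {Ω : Type*} [MetricSpace Ω] [CompactSpace Ω]
    [MeasurableSpace Ω] [BorelSpace Ω]
    (L : EuclideanSpace ℝ (Fin n) → Ω → ℝ)
    (hLcont : Continuous fun q : EuclideanSpace ℝ (Fin n) × Ω => L q.1 q.2)
    (hLnn : ∀ v ω, 0 ≤ L v ω)
    (hLconv : ∀ ω, StrictConvexOn ℝ Set.univ fun v => L v ω)
    {ι : Type*} (A : ι → Ω → EuclideanSpace ℝ (Fin n)) (b : ι → Ω → ℝ) (r : ι → ℝ)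
    (hA : ∀ i, Continuous (A i)) (hb : ∀ i, Continuous (b i))
    (μ : Measure (EuclideanSpace ℝ (Fin n) × Ω)) [IsProbabilityMeasure μ]
    (hintv : Integrable (fun q => ‖q.1‖) μ)
    (hintL : Integrable (fun q => L q.1 q.2) μ)
    (hcon : ∀ i, ∫ q, (⟪A i q.2, q.1⟫ + b i q.2) ∂μ = r i)
    (hmin : ∀ μ' : Measure (EuclideanSpace ℝ (Fin n) × Ω),
      IsProbabilityMeasure μ' →
      Integrable (fun q => ‖q.1‖) μ' →
      Integrable (fun q => L q.1 q.2) μ' →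
      (∀ i, ∫ q, (⟪A i q.2, q.1⟫ + b i q.2) ∂μ' = r i) →
      ∫ q, L q.1 q.2 ∂μ ≤ ∫ q, L q.1 q.2 ∂μ') :
    ∃ V : Ω → EuclideanSpace ℝ (Fin n), Measurable V ∧
      ∀ᵐ q ∂μ, q.1 = V q.2 := by
  have hv : Integrable Prod.fst μ :=
    (integrable_norm_iff measurable_fst.aestronglyMeasurable).1 hintv
  have hLm : Measurable fun q : EuclideanSpace ℝ (Fin n) × Ω => L q.1 q.2 := hLcont.measurable
  have hLc : ∀ ω, Continuous fun v => L v ω := fun ω =>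
    hLcont.comp (continuous_id.prodMk continuous_const)
  have hLgraph := Measure.integrable_graphMeasure_of_nonneg hLnn (fun ω => (hLconv ω).convexOn)
    hLc hLm hv hintL
  have hcon_graph : ∀ i, ∫ q, (⟪A i q.2, q.1⟫ + b i q.2) ∂μ.graphMeasure = r i := fun i => by
    rw [Measure.integral_graphMeasure_inner_add (hA i).measurable (hb i).measurable hv
      (integrable_inner_add_of_continuous (hA i) (hb i) hv), hcon i]
  exact ⟨μ.condBarycenter, μ.measurable_condBarycenter,
    Measure.ae_fst_eq_condBarycenter_of_integral_le hLconv hLc hLm hv hintL hLgraph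
      (hmin _ inferInstance (Measure.integrable_fst_graphMeasure hv).norm hLgraph hcon_graph)⟩
end

section
/- Let γ : ℝⁿ → (0, ∞) satisfy |v|/γ(v) → 0 and L(0, v, ω)/γ(v) → +∞ uniformly in ω as |v| → ∞, where L ≥ 0 is continuous. Define h(φ) = sup_{(v,ω) ∈ ℝⁿ × Ω} (−φ(v, ω) − L(0, v, ω)) for φ in the Banach space C⁰_γ of continuous functions with ‖φ‖_γ = sup |φ(v,ω)|/γ(v) < ∞ and |φ(v,ω)|/γ(v) → 0 as |v| → ∞. Then h is real-valued, convex, and continuous on C⁰_γ. -/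
/-!
Since `L / γ → ∞` while `|φ| ≤ c γ`, the terms `-φ - L` are eventually below `-γ`, and `γ` itself
is eventually at least `|v|`; so far from the origin they lie below any prescribed level, and the
supremum only involves a compact set `closedBall 0 R × Ω`, uniformly for `φ` in a `‖·‖_γ`-ball.
There `γ` is bounded, so a `‖·‖_γ`-perturbation of size `δ` moves every term by at most a multiple
of `δ`. Convexity holds because `h` is a supremum of affine functionals.
-/

open Set

theorem Continuous.exists_le_of_norm_le {E : Type*} [NormedAddCommGroup E] [ProperSpace E]
    {f : E → ℝ} (hf : Continuous f) (R : ℝ) : ∃ M, ∀ v, ‖v‖ ≤ R → f v ≤ M := by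
  obtain ⟨M, hM⟩ := (isCompact_closedBall (0 : E) R).bddAbove_image hf.continuousOn
  exact ⟨M, fun v hv => hM ⟨v, by simpa using hv, rfl⟩⟩

theorem ciSup_neg_sub_convexComb_le {X : Type*} [Nonempty X] {L ψ₁ ψ₂ : X → ℝ}
    (h₁ : BddAbove (range fun x => -ψ₁ x - L x)) (h₂ : BddAbove (range fun x => -ψ₂ x - L x))
    {t : ℝ} (ht₀ : 0 ≤ t) (ht₁ : t ≤ 1) :
    ⨆ x, -(t * ψ₁ x + (1 - t) * ψ₂ x) - L x ≤
      t * (⨆ x, -ψ₁ x - L x) + (1 - t) * ⨆ x, -ψ₂ x - L x := by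
  refine ciSup_le fun x => ?_
  have hle₁ := mul_le_mul_of_nonneg_left (le_ciSup h₁ x) ht₀
  have hle₂ := mul_le_mul_of_nonneg_left (le_ciSup h₂ x) (sub_nonneg.2 ht₁)
  linarith

section WeightedGrowth

variable {E Ω : Type*} [NormedAddCommGroup E] {γ : E → ℝ} {L : E → Ω → ℝ}

theorem exists_neg_sub_le_of_norm_ge (hγ : ∃ R, ∀ v : E, R ≤ ‖v‖ → ‖v‖ ≤ γ v)
    (hL : ∀ c : ℝ, ∃ R, ∀ v ω, R ≤ ‖v‖ → c * γ v ≤ L v ω) (a B : ℝ) :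
    ∃ R, ∀ ψ : E × Ω → ℝ, (∀ q, -ψ q ≤ a * γ q.1) →
      ∀ q : E × Ω, R ≤ ‖q.1‖ → -ψ q - L q.1 q.2 ≤ B := by
  obtain ⟨R₁, hR₁⟩ := hγ
  obtain ⟨R₂, hR₂⟩ := hL (a + 1)
  refine ⟨max (max R₁ R₂) (-B), fun ψ hψ q hq => ?_⟩
  simp only [max_le_iff] at hq
  have hγq := hR₁ q.1 hq.1.1
  have hLq := hR₂ q.1 q.2 hq.1.2
  linarith [hψ q]

theorem bddAbove_range_neg_sub [ProperSpace E] (hγcont : Continuous γ)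
    (hLnn : ∀ v ω, 0 ≤ L v ω) (hL : ∀ c : ℝ, ∃ R, ∀ v ω, R ≤ ‖v‖ → c * γ v ≤ L v ω)
    {ψ : E × Ω → ℝ} {a : ℝ} (hψ : ∀ q, -ψ q ≤ a * γ q.1) :
    BddAbove (range fun q : E × Ω => -ψ q - L q.1 q.2) := by
  obtain ⟨R, hR⟩ := hL a
  obtain ⟨M, hM⟩ := (continuous_const.mul hγcont).exists_le_of_norm_le (f := fun v => a * γ v) R
  refine ⟨max 0 M, forall_mem_range.2 fun q => ?_⟩
  rcases le_total R ‖q.1‖ with hq | hq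
  · linarith [hψ q, hR q.1 q.2 hq, le_max_left 0 M]
  · linarith [hψ q, hLnn q.1 q.2, hM q.1 hq, le_max_right 0 M]

theorem exists_pos_iSup_neg_sub_le_add [ProperSpace E] [TopologicalSpace Ω] [CompactSpace Ω]
    [Nonempty Ω] (hγcont : Continuous γ) (hγ : ∃ R, ∀ v : E, R ≤ ‖v‖ → ‖v‖ ≤ γ v)
    (hL₀ : Continuous (L 0)) (hLnn : ∀ v ω, 0 ≤ L v ω)
    (hL : ∀ c : ℝ, ∃ R, ∀ v ω, R ≤ ‖v‖ → c * γ v ≤ L v ω) (a : ℝ) {ε : ℝ} (hε : 0 < ε) :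
    ∃ δ > 0, ∀ ψ₁ ψ₂ : E × Ω → ℝ, (∀ q, |ψ₁ q| ≤ a * γ q.1) → (∀ q, |ψ₂ q| ≤ a * γ q.1) →
      (∀ q, |ψ₁ q - ψ₂ q| ≤ δ * γ q.1) →
      ⨆ q : E × Ω, -ψ₁ q - L q.1 q.2 ≤ (⨆ q : E × Ω, -ψ₂ q - L q.1 q.2) + ε := by
  obtain ⟨ω₀⟩ := ‹Nonempty Ω›
  obtain ⟨K, hK⟩ := isCompact_univ.bddAbove_image hL₀.continuousOn
  -- every supremum in question is at least `-B`, witnessed at the point `(0, ω₀)`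
  set B := a * γ 0 + K
  obtain ⟨R, hfar⟩ := exists_neg_sub_le_of_norm_ge hγ hL a (-B)
  obtain ⟨M, hM⟩ := hγcont.exists_le_of_norm_le R
  have hM₁ : 0 < max M 1 := lt_max_of_lt_right one_pos
  refine ⟨ε / max M 1, div_pos hε hM₁, fun ψ₁ ψ₂ hψ₁ hψ₂ hclose => ciSup_le fun q => ?_⟩
  have hbdd := bddAbove_range_neg_sub hγcont hLnn hL fun q => (neg_le_abs _).trans (hψ₂ q)
  have hlow : -B ≤ ⨆ q : E × Ω, -ψ₂ q - L q.1 q.2 := by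
    have hLω₀ : L 0 ω₀ ≤ K := hK ⟨ω₀, trivial, rfl⟩
    linarith [le_of_abs_le (hψ₂ (0, ω₀)), le_ciSup hbdd (0, ω₀)]
  rcases le_total R ‖q.1‖ with hq | hq
  · linarith [hfar ψ₁ (fun q => (neg_le_abs _).trans (hψ₁ q)) q hq]
  · have hδγ : ε / max M 1 * γ q.1 ≤ ε :=
      calc ε / max M 1 * γ q.1 ≤ ε / max M 1 * max M 1 := by
            gcongr
            exact (hM q.1 hq).trans (le_max_left M 1)
        _ = ε := div_mul_cancel₀ ε hM₁.ne'
    linarith [(abs_le.1 (hclose q)).1, le_ciSup hbdd q]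

end WeightedGrowth

/-- `h(φ) = sup_{(v,ω)} (−φ(v,ω) − L(0,v,ω))` is real-valued (the sup is of a
nonempty set bounded above), convex, and continuous on `C⁰_γ(ℝⁿ × Ω)` with
respect to the norm `‖φ‖_γ = sup |φ|/γ`. -/
theorem stmt_10 {n : ℕ} {Ω : Type*} [MetricSpace Ω] [CompactSpace Ω] [Nonempty Ω]
    (γ : EuclideanSpace ℝ (Fin n) → ℝ) (hγpos : ∀ v, 0 < γ v)
    (hγcont : Continuous γ)
    (hγgrowth : ∀ ε > (0:ℝ), ∃ R : ℝ, ∀ v : EuclideanSpace ℝ (Fin n),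
      R ≤ ‖v‖ → ‖v‖ ≤ ε * γ v)
    (L : EuclideanSpace ℝ (Fin n) → Ω → ℝ)
    (hLcont : Continuous fun q : EuclideanSpace ℝ (Fin n) × Ω => L q.1 q.2)
    (hLnn : ∀ v ω, 0 ≤ L v ω)
    (hLgrowth : ∀ c : ℝ, ∃ R : ℝ, ∀ (v : EuclideanSpace ℝ (Fin n)) (ω : Ω),
      R ≤ ‖v‖ → c * γ v ≤ L v ω)
    (Cγ : Set (EuclideanSpace ℝ (Fin n) × Ω → ℝ))
    (hCγ : ∀ φ, φ ∈ Cγ ↔ Continuous φ ∧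
      (∃ c : ℝ, ∀ q : EuclideanSpace ℝ (Fin n) × Ω, |φ q| ≤ c * γ q.1) ∧
      (∀ ε > (0:ℝ), ∃ R : ℝ, ∀ q : EuclideanSpace ℝ (Fin n) × Ω,
        R ≤ ‖q.1‖ → |φ q| ≤ ε * γ q.1))
    (h : (EuclideanSpace ℝ (Fin n) × Ω → ℝ) → ℝ)
    (hh : ∀ φ, h φ = sSup (Set.range fun q : EuclideanSpace ℝ (Fin n) × Ω =>
      -φ q - L q.1 q.2)) :
    -- real-valued: the defining sup is over a nonempty set which is bounded above
    (∀ φ ∈ Cγ,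
      (Set.range fun q : EuclideanSpace ℝ (Fin n) × Ω => -φ q - L q.1 q.2).Nonempty ∧
      BddAbove (Set.range fun q : EuclideanSpace ℝ (Fin n) × Ω => -φ q - L q.1 q.2)) ∧
    -- convexity
    (∀ φ₁ ∈ Cγ, ∀ φ₂ ∈ Cγ, ∀ t : ℝ, 0 ≤ t → t ≤ 1 →
      h (fun q => t * φ₁ q + (1 - t) * φ₂ q) ≤ t * h φ₁ + (1 - t) * h φ₂) ∧
    -- continuity in the ‖·‖_γ norm
    (∀ φ₀ ∈ Cγ, ∀ ε > (0:ℝ), ∃ δ > (0:ℝ), ∀ φ ∈ Cγ,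
      (∀ q : EuclideanSpace ℝ (Fin n) × Ω, |φ q - φ₀ q| ≤ δ * γ q.1) →
      |h φ - h φ₀| ≤ ε) := by
  have hγ : ∃ R, ∀ v : EuclideanSpace ℝ (Fin n), R ≤ ‖v‖ → ‖v‖ ≤ γ v := by
    simpa using hγgrowth 1 one_pos
  have hbound : ∀ φ ∈ Cγ, ∃ c, ∀ q, |φ q| ≤ c * γ q.1 := fun φ hφ => ((hCγ φ).1 hφ).2.1
  have hbdd : ∀ φ ∈ Cγ, BddAbove (range fun q => -φ q - L q.1 q.2) := fun φ hφ =>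
    let ⟨_, hc⟩ := hbound φ hφ
    bddAbove_range_neg_sub hγcont hLnn hLgrowth fun q => (neg_le_abs _).trans (hc q)
  simp only [hh, sSup_range]
  refine ⟨fun φ hφ => ⟨range_nonempty _, hbdd φ hφ⟩,
    fun φ₁ hφ₁ φ₂ hφ₂ t ht₀ ht₁ => ciSup_neg_sub_convexComb_le (hbdd φ₁ hφ₁) (hbdd φ₂ hφ₂) ht₀ ht₁,
    fun φ₀ hφ₀ ε hε => ?_⟩
  obtain ⟨c, hc⟩ := hbound φ₀ hφ₀
  obtain ⟨δ, hδ, hsup⟩ := exists_pos_iSup_neg_sub_le_add hγcont hγ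
    (hLcont.comp (.prodMk_right 0)) hLnn hLgrowth (c + 1) hε
  refine ⟨min 1 δ, lt_min one_pos hδ, fun φ _ hclose => ?_⟩
  have hclose₁ : ∀ q, |φ q - φ₀ q| ≤ γ q.1 := fun q =>
    (hclose q).trans (mul_le_of_le_one_left (hγpos _).le (min_le_left 1 δ))
  have hcloseδ : ∀ q, |φ q - φ₀ q| ≤ δ * γ q.1 := fun q =>
    (hclose q).trans (mul_le_mul_of_nonneg_right (min_le_right 1 δ) (hγpos _).le)
  have hφ₀ : ∀ q, |φ₀ q| ≤ (c + 1) * γ q.1 := fun q => by linarith [hc q, hγpos q.1]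
  have hφ : ∀ q, |φ q| ≤ (c + 1) * γ q.1 := fun q => by
    linarith [hc q, hclose₁ q, abs_sub_abs_le_abs_sub (φ q) (φ₀ q)]
  rw [abs_sub_le_iff, sub_le_iff_le_add', sub_le_iff_le_add']
  exact ⟨hsup φ φ₀ hφ hφ₀ hcloseδ,
    hsup φ₀ φ hφ₀ hφ fun q => by rw [abs_sub_comm]; exact hcloseδ q⟩
end

section
/- With h(φ) = sup_{(v,ω)} (−φ(v, ω) − L(0, v, ω)) on C⁰_γ(ℝⁿ × Ω), the Legendre–Fenchel transform h*(μ) = sup_{φ ∈ C⁰_γ} (−∫ φ dμ − h(φ)), taken over the dual space M of weighted Radon measures with ∫ γ d|μ| < ∞, satisfies: h*(μ) = ∫ L(0, v, ω) dμ if μ is a positive probability measure, and h*(μ) = +∞ otherwise. -/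
/-!
If `μ` is a probability measure, `-h(φ) ≤ φ + L` pointwise integrates to
`-∫ φ dμ - h(φ) ≤ ∫ L dμ`; the truncations `φ = -min(L, k)` have `h(φ) ≤ 0` and recover `∫ L dμ`
in the limit by monotone convergence.

Conversely, let `b` bound the values `-∫ φ dμ - h(φ)` from above. Testing `t ψ` with `ψ ≥ 0`
bounded continuous and `t → ∞` gives `∫ ψ dμ⁻ ≤ ∫ ψ dμ⁺`, hence `μ⁻ ≤ μ⁺`, and `μ⁻ = 0` because
the two parts of the Jordan decomposition are mutually singular. Testing constants `k` gives
`k (1 - μ(univ)) ≤ b` for every real `k`, so `μ(univ) = 1`, and the truncations give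
`∫ min(L, k) dμ ≤ b`, so `L` is integrable.

The space `C⁰_γ` enters only through two properties: it contains the bounded continuous
functions (`γ` is bounded below by a positive constant and tends to infinity), and its elements
satisfy `|φ| ≤ L + K` for some constant `K` (`φ = o(γ)` while `L ≥ γ` at infinity).
-/

open MeasureTheory Filter Set
open scoped NNReal Topology BoundedContinuousFunction

/-- The paper's `C⁰_γ(E × Ω)`. -/
def weightedC0 {E : Type*} (Ω : Type*) [NormedAddCommGroup E] [TopologicalSpace Ω]
    (γ : E → ℝ) : Set (E × Ω → ℝ) :=
  {φ | Continuous φ ∧ (∃ c : ℝ, ∀ q : E × Ω, |φ q| ≤ c * γ q.1) ∧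
    ∀ ε > (0 : ℝ), ∃ R : ℝ, ∀ q : E × Ω, R ≤ ‖q.1‖ → |φ q| ≤ ε * γ q.1}

section WeightedC0

variable {E Ω : Type*} [NormedAddCommGroup E] [ProperSpace E] [TopologicalSpace Ω]
  {γ : E → ℝ}

theorem exists_pos_forall_le_of_norm_le_mul (hγpos : ∀ v, 0 < γ v) (hγcont : Continuous γ)
    (hγgrowth : ∀ ε > (0 : ℝ), ∃ R : ℝ, ∀ v : E, R ≤ ‖v‖ → ‖v‖ ≤ ε * γ v) :
    ∃ δ > 0, ∀ v, δ ≤ γ v := by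
  obtain ⟨R, hR⟩ := hγgrowth 1 one_pos
  have htop : Tendsto γ (cocompact E) atTop :=
    tendsto_atTop_mono' _ ((tendsto_norm_cocompact_atTop.eventually_ge_atTop R).mono
      fun v hv => by simpa using hR v hv) tendsto_norm_cocompact_atTop
  obtain ⟨v₀, hv₀⟩ := hγcont.exists_forall_le htop
  exact ⟨γ v₀, hγpos v₀, hv₀⟩

theorem mem_weightedC0_of_abs_le (hγpos : ∀ v, 0 < γ v) (hγcont : Continuous γ)
    (hγgrowth : ∀ ε > (0 : ℝ), ∃ R : ℝ, ∀ v : E, R ≤ ‖v‖ → ‖v‖ ≤ ε * γ v)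
    {φ : E × Ω → ℝ} {M : ℝ} (hφ : Continuous φ) (hM : ∀ q, |φ q| ≤ M) :
    φ ∈ weightedC0 Ω γ := by
  obtain ⟨δ, hδ, hδγ⟩ := exists_pos_forall_le_of_norm_le_mul hγpos hγcont hγgrowth
  refine ⟨hφ, ⟨M / δ, fun q => ?_⟩, fun ε hε => ?_⟩
  · have hM0 : 0 ≤ M := (abs_nonneg _).trans (hM q)
    calc |φ q| ≤ M := hM q
      _ = M / δ * δ := by field_simp
      _ ≤ M / δ * γ q.1 := by gcongr; exact hδγ q.1
  · obtain ⟨R, hR⟩ := hγgrowth ε hε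
    exact ⟨max R M, fun q hq =>
      ((hM q).trans ((le_max_right _ _).trans hq)).trans (hR q.1 ((le_max_left _ _).trans hq))⟩

theorem exists_abs_le_add_of_mem_weightedC0 [CompactSpace Ω] {L : E → Ω → ℝ}
    (hLcont : Continuous fun q : E × Ω => L q.1 q.2)
    (hLgrowth : ∀ c : ℝ, ∃ R : ℝ, ∀ (v : E) (ω : Ω), R ≤ ‖v‖ → c * γ v ≤ L v ω)
    {φ : E × Ω → ℝ} (hφ : φ ∈ weightedC0 Ω γ) : ∃ K, ∀ q, |φ q| ≤ L q.1 q.2 + K := by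
  obtain ⟨hφc, -, hdecay⟩ := hφ
  obtain ⟨R₁, hR₁⟩ := hdecay 1 one_pos
  obtain ⟨R₂, hR₂⟩ := hLgrowth 1
  set R := max R₁ R₂
  obtain ⟨K, hK⟩ := ((isCompact_closedBall (0 : E) R).prod (isCompact_univ (X := Ω))).bddAbove_image
      (f := fun q => |φ q| - L q.1 q.2) ((continuous_abs.comp hφc).sub hLcont).continuousOn
  refine ⟨max K 0, fun q => ?_⟩
  by_cases hq : ‖q.1‖ ≤ R
  · have := hK ⟨q, ⟨by simpa using hq, trivial⟩, rfl⟩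
    linarith [le_max_left K 0]
  · rw [not_le] at hq
    have h₁ := hR₁ q ((le_max_left _ _).trans hq.le)
    have h₂ := hR₂ q.1 q.2 ((le_max_right _ _).trans hq.le)
    linarith [le_max_right K 0]

end WeightedC0

namespace MeasureTheory

variable {X : Type*} [MeasurableSpace X]

theorem Measure.le_of_forall_integral_le [TopologicalSpace X]
    [TopologicalSpace.PseudoMetrizableSpace X] [BorelSpace X] {μ ν : Measure X}
    [IsFiniteMeasure μ] [IsFiniteMeasure ν]
    (h : ∀ f : X →ᵇ ℝ≥0, ∫ x, (f x : ℝ) ∂ν ≤ ∫ x, (f x : ℝ) ∂μ) : ν ≤ μ := by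
  have hclosed : ∀ F, IsClosed F → ν F ≤ μ F := fun F hF =>
    le_of_tendsto_of_tendsto' (HasOuterApproxClosed.tendsto_lintegral_apprSeq hF ν)
      (HasOuterApproxClosed.tendsto_lintegral_apprSeq hF μ) fun n =>
        (ENNReal.toReal_le_toReal (BoundedContinuousFunction.lintegral_lt_top_of_nnreal ν _).ne
          (BoundedContinuousFunction.lintegral_lt_top_of_nnreal μ _).ne).1 <| by
          simpa only [BoundedContinuousFunction.toReal_lintegral_coe_eq_integral] using h _
  refine Measure.le_iff.2 fun s hs => ?_
  rw [hs.measure_eq_iSup_isClosed_of_ne_top (measure_ne_top ν s)]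
  exact iSup₂_le fun F hFs => iSup_le fun hF => (hclosed F hF).trans (measure_mono hFs)

theorem SignedMeasure.nonneg_and_apply_univ_eq_one_iff (s : SignedMeasure X) :
    0 ≤ s ∧ s univ = 1 ↔ s.toJordanDecomposition.negPart = 0 ∧
      IsProbabilityMeasure s.toJordanDecomposition.posPart := by
  have happly := fun {i} (hi : MeasurableSet i) => s.apply_eq_posPart_real_sub_negPart_real hi
  constructor
  · rintro ⟨h0, h1⟩
    have hneg : s.toJordanDecomposition.negPart = 0 :=
      s.toJordanDecomposition.mutuallySingular.symm.disjoint.eq_bot_of_le <|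
        Measure.le_iff.2 fun i hi => (ENNReal.toReal_le_toReal (measure_ne_top _ _)
          (measure_ne_top _ _)).1 <| by
            simpa [happly hi, measureReal_def] using VectorMeasure.le_iff.1 h0 i hi
    refine ⟨hneg, ⟨(ENNReal.toReal_eq_one_iff _).1 ?_⟩⟩
    simpa [happly MeasurableSet.univ, hneg, measureReal_def] using h1
  · rintro ⟨hneg, hprob⟩
    exact ⟨VectorMeasure.le_iff.2 fun i hi => by simp [happly hi, hneg],
      by simp [happly MeasurableSet.univ, hneg]⟩

theorem integrable_and_integral_le_of_forall_integral_min_le {μ : Measure X}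
    [IsFiniteMeasure μ] {f : X → ℝ} (hf : Measurable f) (hf0 : ∀ x, 0 ≤ f x) {b : ℝ}
    (h : ∀ k : ℕ, ∫ x, min (f x) k ∂μ ≤ b) : Integrable f μ ∧ ∫ x, f x ∂μ ≤ b := by
  have hmin0 : ∀ (k : ℕ) x, 0 ≤ min (f x) k := fun k x => le_min (hf0 x) k.cast_nonneg
  have hmin_int : ∀ k : ℕ, Integrable (fun x => min (f x) k) μ := fun k =>
    (integrable_const (k : ℝ)).mono' (hf.min measurable_const).aestronglyMeasurable
      (ae_of_all _ fun x => by
        rw [Real.norm_eq_abs, abs_of_nonneg (hmin0 k x)]; exact min_le_right _ _)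
  have hlim : Tendsto (fun k : ℕ => ∫⁻ x, ENNReal.ofReal (min (f x) k) ∂μ) atTop
      (𝓝 (∫⁻ x, ENNReal.ofReal (f x) ∂μ)) :=
    lintegral_tendsto_of_tendsto_of_monotone
      (fun k => (hf.min measurable_const).ennreal_ofReal.aemeasurable)
      (ae_of_all _ fun x i j hij =>
        ENNReal.ofReal_le_ofReal (min_le_min_left _ (Nat.cast_le.2 hij)))
      (ae_of_all _ fun x => (ENNReal.continuous_ofReal.tendsto _).comp <|
        tendsto_const_nhds.congr' <|
          (tendsto_natCast_atTop_atTop.eventually_ge_atTop (f x)).mono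
            fun k hk => (min_eq_left hk).symm)
  have hlin : ∫⁻ x, ENNReal.ofReal (f x) ∂μ ≤ ENNReal.ofReal b :=
    le_of_tendsto' hlim fun k => by
      rw [← ofReal_integral_eq_lintegral_ofReal (hmin_int k) (ae_of_all _ (hmin0 k))]
      exact ENNReal.ofReal_le_ofReal (h k)
  have hint : Integrable f μ := ⟨hf.aestronglyMeasurable,
    (hasFiniteIntegral_iff_ofReal (ae_of_all _ hf0)).2 (hlin.trans_lt ENNReal.ofReal_lt_top)⟩
  have hb0 : 0 ≤ b := (integral_nonneg (hmin0 0)).trans (h 0)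
  refine ⟨hint, (ENNReal.ofReal_le_ofReal_iff hb0).1 ?_⟩
  rwa [ofReal_integral_eq_lintegral_ofReal hint (ae_of_all _ hf0)]

end MeasureTheory

theorem nonpos_of_forall_nonneg_mul_le {a b : ℝ} (h : ∀ t, 0 ≤ t → t * a ≤ b) : a ≤ 0 := by
  by_contra! ha
  have := h ((max b 0 + 1) / a) (by positivity)
  rw [div_mul_cancel₀ _ ha.ne'] at this
  linarith [le_max_left b 0]

section Conjugate

variable {X : Type*} [TopologicalSpace X] [MeasurableSpace X] {C : Set (X → ℝ)} {L : X → ℝ}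

/-- The values `-∫ φ dμ - h(φ)`, `φ ∈ C`, whose supremum is `h*(μ)`, for `μ = μpos - μneg` and
`h(φ) = ⨆ x, -φ x - L x`. -/
def conjugateValues (C : Set (X → ℝ)) (L : X → ℝ) (μpos μneg : Measure X) : Set ℝ :=
  {r | ∃ φ ∈ C, r = -(∫ x, φ x ∂μpos - ∫ x, φ x ∂μneg) - ⨆ x, -φ x - L x}

theorem integral_min_le_of_mem_upperBounds [OpensMeasurableSpace X]
    (hC : ∀ (φ : X → ℝ) (M : ℝ), Continuous φ → (∀ x, |φ x| ≤ M) → φ ∈ C)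
    (hL : Continuous L) (hL0 : ∀ x, 0 ≤ L x) {μ : Measure X} {b : ℝ}
    (hb : b ∈ upperBounds (conjugateValues C L μ 0)) (k : ℕ) : ∫ x, min (L x) k ∂μ ≤ b := by
  have hφ : (fun x => -min (L x) k) ∈ C := hC _ k (hL.min continuous_const).neg fun x => by
    rw [abs_neg, abs_of_nonneg (le_min (hL0 x) k.cast_nonneg)]
    exact min_le_right _ _
  have hsup : ⨆ x, min (L x) k - L x ≤ 0 :=
    Real.iSup_nonpos fun x => by linarith [min_le_left (L x) k]
  have hval := hb ⟨_, hφ, rfl⟩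
  simp only [integral_zero_measure, integral_neg, neg_zero, sub_zero, neg_neg] at hval
  linarith

theorem isLUB_conjugateValues_of_isProbabilityMeasure [OpensMeasurableSpace X]
    (hC : ∀ (φ : X → ℝ) (M : ℝ), Continuous φ → (∀ x, |φ x| ≤ M) → φ ∈ C)
    (hCle : ∀ φ ∈ C, Continuous φ ∧ ∃ K, ∀ x, |φ x| ≤ L x + K)
    (hL : Continuous L) (hL0 : ∀ x, 0 ≤ L x) (μ : Measure X) [IsProbabilityMeasure μ]
    (hLint : Integrable L μ) : IsLUB (conjugateValues C L μ 0) (∫ x, L x ∂μ) := by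
  refine ⟨?_, fun b hb => (integrable_and_integral_le_of_forall_integral_min_le hL.measurable
    hL0 (integral_min_le_of_mem_upperBounds hC hL hL0 hb)).2⟩
  rintro _ ⟨φ, hφ, rfl⟩
  obtain ⟨hφc, K, hK⟩ := hCle φ hφ
  have hbdd : BddAbove (range fun x => -φ x - L x) :=
    ⟨K, by rintro _ ⟨x, rfl⟩; linarith [neg_le_abs (φ x), hK x]⟩
  have hφint : Integrable φ μ :=
    (hLint.add (integrable_const K)).mono' hφc.aestronglyMeasurable (ae_of_all _ hK)
  have hpt : ∀ x, -(⨆ y, -φ y - L y) ≤ φ x + L x := fun x => by linarith [le_ciSup hbdd x]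
  have hmono :=
    integral_mono (g := fun x => φ x + L x) (integrable_const _) (hφint.add hLint) hpt
  simp only [integral_const, probReal_univ, one_smul, integral_add hφint hLint] at hmono
  simp only [integral_zero_measure, sub_zero]
  linarith

theorem integral_le_integral_of_bddAbove
    (hC : ∀ (φ : X → ℝ) (M : ℝ), Continuous φ → (∀ x, |φ x| ≤ M) → φ ∈ C)
    (hL0 : ∀ x, 0 ≤ L x) {μpos μneg : Measure X}
    (hbdd : BddAbove (conjugateValues C L μpos μneg))
    {ψ : X → ℝ} {M : ℝ} (hψ : Continuous ψ) (hψ0 : ∀ x, 0 ≤ ψ x) (hψM : ∀ x, ψ x ≤ M) :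
    ∫ x, ψ x ∂μneg ≤ ∫ x, ψ x ∂μpos := by
  obtain ⟨b, hb⟩ := hbdd
  refine sub_nonpos.1 (nonpos_of_forall_nonneg_mul_le (b := b) fun t ht => ?_)
  have hφ : (fun x => t * ψ x) ∈ C := hC _ (t * M) (continuous_const.mul hψ) fun x => by
    rw [abs_of_nonneg (mul_nonneg ht (hψ0 x))]
    exact mul_le_mul_of_nonneg_left (hψM x) ht
  have hsup : ⨆ x, -(t * ψ x) - L x ≤ 0 :=
    Real.iSup_nonpos fun x => by linarith [mul_nonneg ht (hψ0 x), hL0 x]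
  have hval := hb ⟨_, hφ, rfl⟩
  rw [integral_const_mul, integral_const_mul] at hval
  linarith

theorem measure_univ_eq_one_of_bddAbove [Nonempty X]
    (hC : ∀ (φ : X → ℝ) (M : ℝ), Continuous φ → (∀ x, |φ x| ≤ M) → φ ∈ C)
    (hL0 : ∀ x, 0 ≤ L x) {μ : Measure X} [IsFiniteMeasure μ]
    (hbdd : BddAbove (conjugateValues C L μ 0)) : μ univ = 1 := by
  obtain ⟨b, hb⟩ := hbdd
  have hval : ∀ k : ℝ, k * (1 - μ.real univ) ≤ b := fun k => by
    have hsup : ⨆ x, -k - L x ≤ -k := ciSup_le fun x => by linarith [hL0 x]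
    have := hb ⟨fun _ => k, hC _ |k| continuous_const fun _ => le_rfl, rfl⟩
    simp only [integral_const, smul_eq_mul, measureReal_zero_apply, zero_mul, sub_zero] at this
    linarith
  have h₁ := nonpos_of_forall_nonneg_mul_le fun t _ => hval t
  have h₂ := nonpos_of_forall_nonneg_mul_le fun t _ => by
    rw [mul_neg, ← neg_mul]; exact hval (-t)
  rw [← ENNReal.toReal_eq_one_iff, ← measureReal_def]
  linarith

theorem nonneg_and_apply_univ_eq_one_and_integrable_of_bddAbove
    [TopologicalSpace.PseudoMetrizableSpace X] [BorelSpace X] [Nonempty X]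
    (hC : ∀ (φ : X → ℝ) (M : ℝ), Continuous φ → (∀ x, |φ x| ≤ M) → φ ∈ C)
    (hL : Continuous L) (hL0 : ∀ x, 0 ≤ L x) (s : SignedMeasure X)
    (hbdd : BddAbove (conjugateValues C L s.toJordanDecomposition.posPart
      s.toJordanDecomposition.negPart)) :
    0 ≤ s ∧ s univ = 1 ∧ Integrable L s.toJordanDecomposition.posPart := by
  have hneg : s.toJordanDecomposition.negPart = 0 :=
    s.toJordanDecomposition.mutuallySingular.symm.disjoint.eq_bot_of_le <|
      Measure.le_of_forall_integral_le fun f =>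
        integral_le_integral_of_bddAbove hC hL0 hbdd (NNReal.continuous_coe.comp f.continuous)
        (fun x => (f x).2)
        (fun x => NNReal.coe_le_coe.2 (BoundedContinuousFunction.NNReal.upper_bound f x))
  rw [hneg] at hbdd
  obtain ⟨b, hb⟩ := id hbdd
  rw [← and_assoc, s.nonneg_and_apply_univ_eq_one_iff]
  exact ⟨⟨hneg, ⟨measure_univ_eq_one_of_bddAbove hC hL0 hbdd⟩⟩,
    (integrable_and_integral_le_of_forall_integral_min_le hL.measurable hL0
      (integral_min_le_of_mem_upperBounds hC hL hL0 hb)).1⟩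

theorem isLUB_conjugateValues [OpensMeasurableSpace X]
    (hC : ∀ (φ : X → ℝ) (M : ℝ), Continuous φ → (∀ x, |φ x| ≤ M) → φ ∈ C)
    (hCle : ∀ φ ∈ C, Continuous φ ∧ ∃ K, ∀ x, |φ x| ≤ L x + K)
    (hL : Continuous L) (hL0 : ∀ x, 0 ≤ L x) (s : SignedMeasure X) (hs : 0 ≤ s)
    (hs1 : s univ = 1) (hLint : Integrable L s.toJordanDecomposition.posPart) :
    IsLUB (conjugateValues C L s.toJordanDecomposition.posPart s.toJordanDecomposition.negPart)
      (∫ x, L x ∂s.toJordanDecomposition.posPart) := by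
  obtain ⟨hneg, _⟩ := s.nonneg_and_apply_univ_eq_one_iff.1 ⟨hs, hs1⟩
  rw [hneg]
  exact isLUB_conjugateValues_of_isProbabilityMeasure hC hCle hL hL0 _ hLint

end Conjugate

theorem stmt_11_general {n : ℕ} {Ω : Type*} [MetricSpace Ω] [CompactSpace Ω] [Nonempty Ω]
    [MeasurableSpace Ω] [BorelSpace Ω]
    (γ : EuclideanSpace ℝ (Fin n) → ℝ) (hγpos : ∀ v, 0 < γ v)
    (hγcont : Continuous γ)
    (hγgrowth : ∀ ε > (0:ℝ), ∃ R : ℝ, ∀ v : EuclideanSpace ℝ (Fin n),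
      R ≤ ‖v‖ → ‖v‖ ≤ ε * γ v)
    (L : EuclideanSpace ℝ (Fin n) → Ω → ℝ)
    (hLcont : Continuous fun q : EuclideanSpace ℝ (Fin n) × Ω => L q.1 q.2)
    (hLnn : ∀ v ω, 0 ≤ L v ω)
    (hLgrowth : ∀ c : ℝ, ∃ R : ℝ, ∀ (v : EuclideanSpace ℝ (Fin n)) (ω : Ω),
      R ≤ ‖v‖ → c * γ v ≤ L v ω)
    (Cγ : Set (EuclideanSpace ℝ (Fin n) × Ω → ℝ))
    (hCγ : ∀ φ, φ ∈ Cγ ↔ Continuous φ ∧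
      (∃ c : ℝ, ∀ q : EuclideanSpace ℝ (Fin n) × Ω, |φ q| ≤ c * γ q.1) ∧
      (∀ ε > (0:ℝ), ∃ R : ℝ, ∀ q : EuclideanSpace ℝ (Fin n) × Ω,
        R ≤ ‖q.1‖ → |φ q| ≤ ε * γ q.1))
    (h : (EuclideanSpace ℝ (Fin n) × Ω → ℝ) → ℝ)
    (hh : ∀ φ, h φ = sSup (Set.range fun q : EuclideanSpace ℝ (Fin n) × Ω =>
      -φ q - L q.1 q.2))
    (μ : SignedMeasure (EuclideanSpace ℝ (Fin n) × Ω))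
    (I : (EuclideanSpace ℝ (Fin n) × Ω → ℝ) → ℝ)
    (hI : ∀ φ, I φ = ∫ q, φ q ∂μ.toJordanDecomposition.posPart -
      ∫ q, φ q ∂μ.toJordanDecomposition.negPart)
    (S : Set ℝ) (hS : S = {r : ℝ | ∃ φ ∈ Cγ, r = -I φ - h φ}) :
    ((0 ≤ μ ∧ μ Set.univ = 1 ∧
        Integrable (fun q => L q.1 q.2) μ.toJordanDecomposition.posPart) →
      IsLUB S (∫ q, L q.1 q.2 ∂μ.toJordanDecomposition.posPart)) ∧
    (¬ (0 ≤ μ ∧ μ Set.univ = 1 ∧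
        Integrable (fun q => L q.1 q.2) μ.toJordanDecomposition.posPart) →
      ¬ BddAbove S) := by
  obtain rfl : Cγ = weightedC0 Ω γ := Set.ext hCγ
  obtain rfl : h = fun φ => ⨆ q, -φ q - L q.1 q.2 := funext hh
  obtain rfl : I = fun φ => ∫ q, φ q ∂μ.toJordanDecomposition.posPart -
      ∫ q, φ q ∂μ.toJordanDecomposition.negPart := funext hI
  obtain rfl : S = conjugateValues (weightedC0 Ω γ) (fun q => L q.1 q.2)
      μ.toJordanDecomposition.posPart μ.toJordanDecomposition.negPart := hS
  have hC : ∀ φ M, Continuous φ → (∀ q, |φ q| ≤ M) → φ ∈ weightedC0 Ω γ := fun _ _ =>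
    mem_weightedC0_of_abs_le hγpos hγcont hγgrowth
  have hCle : ∀ φ ∈ weightedC0 Ω γ, Continuous φ ∧ ∃ K, ∀ q, |φ q| ≤ L q.1 q.2 + K :=
    fun φ hφ => ⟨hφ.1, exists_abs_le_add_of_mem_weightedC0 hLcont hLgrowth hφ⟩
  have hL0 : ∀ q : EuclideanSpace ℝ (Fin n) × Ω, 0 ≤ L q.1 q.2 := fun q => hLnn q.1 q.2
  exact ⟨fun ⟨h0, h1, hint⟩ => isLUB_conjugateValues hC hCle hLcont hL0 μ h0 h1 hint,
    fun hnot hbdd => hnot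
      (nonneg_and_apply_univ_eq_one_and_integrable_of_bddAbove hC hLcont hL0 μ hbdd)⟩

/-- The Legendre–Fenchel transform of
`h(φ) = sup_{(v,ω)} (−φ(v,ω) − L(0,v,ω))` on `C⁰_γ`, over the weighted Radon
measures `μ` with `∫ γ d|μ| < ∞`, equals `∫ L dμ` when `μ` is a positive
probability measure (the set `{−∫φ dμ − h(φ)}` has `∫ L dμ` as least upper
bound) and `+∞` otherwise (that set is unbounded above). -/
theorem stmt_11 {n : ℕ} {Ω : Type*} [MetricSpace Ω] [CompactSpace Ω] [Nonempty Ω]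
    [MeasurableSpace Ω] [BorelSpace Ω]
    (γ : EuclideanSpace ℝ (Fin n) → ℝ) (hγpos : ∀ v, 0 < γ v)
    (hγcont : Continuous γ)
    (hγgrowth : ∀ ε > (0:ℝ), ∃ R : ℝ, ∀ v : EuclideanSpace ℝ (Fin n),
      R ≤ ‖v‖ → ‖v‖ ≤ ε * γ v)
    (L : EuclideanSpace ℝ (Fin n) → Ω → ℝ)
    (hLcont : Continuous fun q : EuclideanSpace ℝ (Fin n) × Ω => L q.1 q.2)
    (hLnn : ∀ v ω, 0 ≤ L v ω)
    (hLgrowth : ∀ c : ℝ, ∃ R : ℝ, ∀ (v : EuclideanSpace ℝ (Fin n)) (ω : Ω),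
      R ≤ ‖v‖ → c * γ v ≤ L v ω)
    (Cγ : Set (EuclideanSpace ℝ (Fin n) × Ω → ℝ))
    (hCγ : ∀ φ, φ ∈ Cγ ↔ Continuous φ ∧
      (∃ c : ℝ, ∀ q : EuclideanSpace ℝ (Fin n) × Ω, |φ q| ≤ c * γ q.1) ∧
      (∀ ε > (0:ℝ), ∃ R : ℝ, ∀ q : EuclideanSpace ℝ (Fin n) × Ω,
        R ≤ ‖q.1‖ → |φ q| ≤ ε * γ q.1))
    (h : (EuclideanSpace ℝ (Fin n) × Ω → ℝ) → ℝ)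
    (hh : ∀ φ, h φ = sSup (Set.range fun q : EuclideanSpace ℝ (Fin n) × Ω =>
      -φ q - L q.1 q.2))
    (μ : SignedMeasure (EuclideanSpace ℝ (Fin n) × Ω))
    (hμγ : ∫⁻ q, ENNReal.ofReal (γ q.1) ∂μ.totalVariation < ⊤)
    (I : (EuclideanSpace ℝ (Fin n) × Ω → ℝ) → ℝ)
    (hI : ∀ φ, I φ = ∫ q, φ q ∂μ.toJordanDecomposition.posPart -
      ∫ q, φ q ∂μ.toJordanDecomposition.negPart)
    (S : Set ℝ) (hS : S = {r : ℝ | ∃ φ ∈ Cγ, r = -I φ - h φ}) :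
    ((0 ≤ μ ∧ μ Set.univ = 1 ∧
        Integrable (fun q => L q.1 q.2) μ.toJordanDecomposition.posPart) →
      IsLUB S (∫ q, L q.1 q.2 ∂μ.toJordanDecomposition.posPart)) ∧
    (¬ (0 ≤ μ ∧ μ Set.univ = 1 ∧
        Integrable (fun q => L q.1 q.2) μ.toJordanDecomposition.posPart) →
      ¬ BddAbove S) :=
  stmt_11_general γ hγpos hγcont hγgrowth L hLcont hLnn hLgrowth Cγ hCγ h hh μ I hI S hS
end

section
/- Let u_α(x) be a family of semiconcave functions on ℝ (u_α(x) − (γ/2)x² concave for a fixed γ, uniformly in α) that are twice differentiable a.e., and let θ be a probability measure such that ∫ u_α'(u_α'')' dθ = 0 (holonomy) and the differentiated Hamilton–Jacobi identity u_x (u_{xx})_x + u_{xx}² + V''(x) + α u_{xx} = 0 holds θ-a.e., with |V''| ≤ c. Then ∫ u_{xx}² dθ ≤ ∫ (α² − 2V''(x)) dθ, using the inequality −α u_{xx} ≤ (1/2)u_{xx}² + (1/2)α². -/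
open MeasureTheory

/-
Young's inequality `-α u_{xx} ≤ u_{xx}²/2 + α²/2` turns the differentiated Hamilton–Jacobi identity
into the pointwise bound `u_{xx}² ≤ α² - 2 V'' - 2 u_x (u_{xx})_x`; integrating against `θ`, the
last term vanishes by holonomy.
-/

lemma sq_le_of_add_sq_add_add_mul_eq_zero {w a v α : ℝ} (h : w + a ^ 2 + v + α * a = 0) :
    a ^ 2 ≤ α ^ 2 - 2 * v - 2 * w := by
  nlinarith [sq_nonneg (a + α)]

theorem integral_sq_le_of_ae_add_sq_add_add_mul_eq_zero {X : Type*} [MeasurableSpace X]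
    {μ : Measure X} [IsFiniteMeasure μ] {w f v : X → ℝ} (α : ℝ)
    (h : ∀ᵐ x ∂μ, w x + f x ^ 2 + v x + α * f x = 0)
    (hw : Integrable w μ) (hw_zero : ∫ x, w x ∂μ = 0) (hv : Integrable v μ) :
    ∫ x, f x ^ 2 ∂μ ≤ ∫ x, (α ^ 2 - 2 * v x) ∂μ := by
  have hbound : Integrable (fun x => α ^ 2 - 2 * v x) μ :=
    (integrable_const _).sub (hv.const_mul 2)
  calc ∫ x, f x ^ 2 ∂μ ≤ ∫ x, (α ^ 2 - 2 * v x - 2 * w x) ∂μ :=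
        integral_mono_of_nonneg (.of_forall fun x => sq_nonneg (f x))
          (hbound.sub (hw.const_mul 2))
          (h.mono fun x hx => sq_le_of_add_sq_add_add_mul_eq_zero hx)
    _ = ∫ x, (α ^ 2 - 2 * v x) ∂μ := by
        rw [integral_sub hbound (hw.const_mul 2), integral_const_mul, hw_zero, mul_zero,
          sub_zero]

theorem stmt_17_general (α : ℝ) (u V : ℝ → ℝ)
    (θ : Measure ℝ) [IsProbabilityMeasure θ]
    (hae : ∀ᵐ x ∂θ,
      deriv u x * deriv^[3] u x + (deriv^[2] u x) ^ 2 + deriv^[2] V x +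
        α * deriv^[2] u x = 0)
    (hhol : ∫ x, deriv u x * deriv^[3] u x ∂θ = 0)
    (hint1 : Integrable (fun x => deriv u x * deriv^[3] u x) θ)
    (hint4 : Integrable (fun x => deriv^[2] V x) θ) :
    ∫ x, (deriv^[2] u x) ^ 2 ∂θ ≤ ∫ x, (α ^ 2 - 2 * deriv^[2] V x) ∂θ :=
  integral_sq_le_of_ae_add_sq_add_add_mul_eq_zero α hae hint1 hhol hint4

/-- One-dimensional model estimate: if the twice-differentiated
Hamilton–Jacobi identity `u_x (u_{xx})_x + u_{xx}² + V'' + α u_{xx} = 0` holds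
`θ`-a.e., `∫ u_x (u_{xx})_x dθ = 0` (holonomy), `u` is semiconcave and
`|V''| ≤ c`, then `∫ u_{xx}² dθ ≤ ∫ (α² − 2V'') dθ`. -/
theorem stmt_17 (α γ c : ℝ) (u V : ℝ → ℝ)
    (θ : Measure ℝ) [IsProbabilityMeasure θ]
    (hconc : ConcaveOn ℝ Set.univ fun x => u x - γ / 2 * x ^ 2)
    (hae : ∀ᵐ x ∂θ,
      deriv u x * deriv^[3] u x + (deriv^[2] u x) ^ 2 + deriv^[2] V x +
        α * deriv^[2] u x = 0)
    (hVbd : ∀ x, |deriv^[2] V x| ≤ c)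
    (hhol : ∫ x, deriv u x * deriv^[3] u x ∂θ = 0)
    (hint1 : Integrable (fun x => deriv u x * deriv^[3] u x) θ)
    (hint2 : Integrable (fun x => (deriv^[2] u x) ^ 2) θ)
    (hint3 : Integrable (fun x => deriv^[2] u x) θ)
    (hint4 : Integrable (fun x => deriv^[2] V x) θ) :
    ∫ x, (deriv^[2] u x) ^ 2 ∂θ ≤ ∫ x, (α ^ 2 - 2 * deriv^[2] V x) ∂θ :=
  stmt_17_general α u V θ hae hhol hint1 hint4
end

section
/- In the one-dimensional model, let u be a solution of (1/2)u_x² + V(x) + α u = 0 and let μ_α be a discounted Mather measure whose trace equals its projection θ. If at a point (x, v) in the support of μ_α one had v ≠ −u_x(x) on a set of positive μ_α-measure, then ∫ L dμ_α > α ∫ u dθ_α, contradicting optimality (since the minimum of the discounted action equals α ∫ u dθ_α). Hence v = −u_x(x) for μ_α-almost every (x, v). The key pointwise inequality is L(x, v) + v·u_x(x) ≥ −H(u_x(x), x), with equality iff v = −D_pH(u_x, x) = −u_x. -/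
open MeasureTheory

/-!
Along the Hamilton–Jacobi equation `p²/2 + V + αu = 0` the Fenchel–Young gap of the Lagrangian
is a perfect square: `L(x, v) + v p(x) − α u(x) = (v + p(x))² / 2`. Integrating against `μ`, the
holonomy constraint turns `∫ (v p − α u) dμ` into `−α ∫ u dθ`, which cancels the optimal action
`α ∫ u dθ`. Hence `∫ (v + p)² / 2 dμ = 0`, and the nonnegative integrand vanishes `μ`-a.e.
-/

theorem lagrangian_add_eq_half_sq_of_hamiltonJacobi {α V u p v : ℝ}
    (hHJ : p ^ 2 / 2 + V + α * u = 0) :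
    (v ^ 2 / 2 - V) + (v * p - α * u) = (v + p) ^ 2 / 2 := by
  linear_combination -hHJ

theorem ae_eq_neg_of_integral_half_sq_add_eq_zero {X : Type*} [MeasurableSpace X]
    {μ : Measure X} {f g : X → ℝ} (hint : Integrable (fun x => (f x + g x) ^ 2 / 2) μ)
    (h : ∫ x, (f x + g x) ^ 2 / 2 ∂μ = 0) : ∀ᵐ x ∂μ, f x = -g x := by
  have hzero := (integral_eq_zero_iff_of_nonneg (fun x => by positivity) hint).mp h
  filter_upwards [hzero] with x hx
  have : (f x + g x) ^ 2 = 0 := by simpa using hx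
  exact eq_neg_of_add_eq_zero_left (pow_eq_zero_iff two_ne_zero |>.mp this)

theorem stmt_18_general (α : ℝ) (V u p : ℝ → ℝ)
    (hHJ : ∀ x, (p x) ^ 2 / 2 + V x + α * u x = 0)
    (μ : Measure (ℝ × ℝ))
    (θ : Measure ℝ) (hθ : θ = μ.map Prod.fst)
    (hintL : Integrable (fun q => q.2 ^ 2 / 2 - V q.1) μ)
    (hintvp : Integrable (fun q => q.2 * p q.1) μ)
    (hintu : Integrable u θ)
    -- discounted holonomy constraint, applied with test function `u`
    (hhol : ∫ q, (q.2 * p q.1 - α * u q.1) ∂μ = -α * ∫ x, u x ∂θ)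
    -- optimality: the discounted action equals `H̄_α = α ∫ u dθ`
    (hopt : ∫ q, (q.2 ^ 2 / 2 - V q.1) ∂μ = α * ∫ x, u x ∂θ) :
    ∀ᵐ q ∂μ, q.2 = -(p q.1) := by
  have hintu_fst : Integrable (fun q : ℝ × ℝ => u q.1) μ :=
    (hθ ▸ hintu).comp_aemeasurable measurable_fst.aemeasurable
  have hinthol : Integrable (fun q : ℝ × ℝ => q.2 * p q.1 - α * u q.1) μ :=
    hintvp.sub (hintu_fst.const_mul α)
  have hgap (q : ℝ × ℝ) :
      (q.2 ^ 2 / 2 - V q.1) + (q.2 * p q.1 - α * u q.1) = (q.2 + p q.1) ^ 2 / 2 :=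
    lagrangian_add_eq_half_sq_of_hamiltonJacobi (hHJ q.1)
  refine ae_eq_neg_of_integral_half_sq_add_eq_zero ((hintL.add hinthol).congr (.of_forall hgap)) ?_
  calc ∫ q, (q.2 + p q.1) ^ 2 / 2 ∂μ
      = ∫ q, (q.2 ^ 2 / 2 - V q.1) ∂μ + ∫ q, (q.2 * p q.1 - α * u q.1) ∂μ := by
        simp only [← hgap]; exact integral_add hintL hinthol
    _ = 0 := by rw [hopt, hhol]; ring

/-- In the one-dimensional model with `L(x,v) = v²/2 − V(x)` and
`H(x,p) = p²/2 + V(x)`, if `u` solves `(1/2)u_x² + V + αu = 0`, `μ_α` is a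
discounted Mather measure whose trace equals its projection `θ` (so it is
holonomic), and the discounted action of `μ_α` attains the optimal value
`α ∫ u dθ`, then `v = −u_x(x)` for `μ_α`-almost every `(x, v)`. -/
theorem stmt_18 (α : ℝ) (hα : 0 < α) (V u p : ℝ → ℝ)
    (hder : ∀ x, HasDerivAt u (p x) x)
    (hHJ : ∀ x, (p x) ^ 2 / 2 + V x + α * u x = 0)
    (μ : Measure (ℝ × ℝ)) [IsProbabilityMeasure μ]
    (θ : Measure ℝ) (hθ : θ = μ.map Prod.fst)
    (hintL : Integrable (fun q => q.2 ^ 2 / 2 - V q.1) μ)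
    (hintvp : Integrable (fun q => q.2 * p q.1) μ)
    (hintu : Integrable u θ)
    -- discounted holonomy constraint, applied with test function `u`
    (hhol : ∫ q, (q.2 * p q.1 - α * u q.1) ∂μ = -α * ∫ x, u x ∂θ)
    -- optimality: the discounted action equals `H̄_α = α ∫ u dθ`
    (hopt : ∫ q, (q.2 ^ 2 / 2 - V q.1) ∂μ = α * ∫ x, u x ∂θ) :
    ∀ᵐ q ∂μ, q.2 = -(p q.1) :=
  stmt_18_general α V u p hHJ μ θ hθ hintL hintvp hintu hhol hopt
end

section
/- Let u : ℝⁿ → ℝ be semiconcave with constant C (i.e., u(z) ≤ u(y) + Du(y)·(z−y) + C|z−y|² whenever Du(y) exists), differentiable at 0, and satisfy the second-order Taylor-type estimates u(y) − u(0) − Du(0)·y ≤ C|y|² and u(−y) − u(0) + Du(0)·y ≤ C|y|², together with the two-sided bound |u(y) − 2u(0) + u(−y)| ≤ C|y|². Then for every y at which Du(y) exists, |Du(y) − Du(0)| ≤ C'|y| for a constant C' depending only on C. (The proof chooses z = y + |y|·(Du(0) − Du(y))/|Du(0) − Du(y)| in the semiconcavity inequality.) -/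
open scoped RealInnerProductSpace

/-!
Put `d = Du(0) - Du(y)` and test semiconcavity at `y` against `z = y + (|y| / |d|) d`, a point at
distance `|y|` from `y`. The linear terms differ by `|y| |d|`, while the upper quadratic bound at
`y` and the lower quadratic bound at `z` (the latter coming from the second-difference estimate)
cost only `O(|y|²)`, since `|z| ≤ 2 |y|`. Hence `|y| |d| = O(|y|²)`.
-/

variable {E : Type*} [NormedAddCommGroup E] [InnerProductSpace ℝ E]

theorem norm_sub_le_mul_norm_of_quadratic_bounds {u : E → ℝ} {p q y : E} {A B C : ℝ}
    (hsc : ∀ z, u z ≤ u y + ⟪p, z - y⟫ + C * ‖z - y‖ ^ 2)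
    (hup : u y ≤ u 0 + ⟪q, y⟫ + A * ‖y‖ ^ 2)
    (hlow : ∀ z, u 0 + ⟪q, z⟫ - B * ‖z‖ ^ 2 ≤ u z)
    (hB : 0 ≤ B) (hy0 : y ≠ 0) (hpq : p ≠ q) :
    ‖p - q‖ ≤ (C + A + 4 * B) * ‖y‖ := by
  set d := q - p
  have hd : 0 < ‖d‖ := norm_pos_iff.2 (sub_ne_zero.2 hpq.symm)
  have hy : 0 < ‖y‖ := norm_pos_iff.2 hy0
  set t := ‖y‖ / ‖d‖
  have ht : t * ‖d‖ = ‖y‖ := div_mul_cancel₀ _ hd.ne'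
  have htd : ‖t • d‖ = ‖y‖ := by
    rw [norm_smul, Real.norm_of_nonneg (by positivity), ht]
  have hgain : ⟪d, t • d⟫ = ‖y‖ * ‖d‖ := by
    rw [real_inner_smul_right, real_inner_self_eq_norm_sq, sq, ← mul_assoc, ht]
  have hz : ‖y + t • d‖ ^ 2 ≤ 4 * ‖y‖ ^ 2 := by
    have : ‖y + t • d‖ ≤ 2 * ‖y‖ := (norm_add_le _ _).trans (by rw [htd]; linarith)
    nlinarith [norm_nonneg (y + t • d)]
  have hsc_z := hsc (y + t • d)
  have hlow_z := hlow (y + t • d)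
  rw [add_sub_cancel_left, htd] at hsc_z
  rw [inner_add_right] at hlow_z
  have hd_inner : ⟪d, t • d⟫ = ⟪q, t • d⟫ - ⟪p, t • d⟫ := inner_sub_left _ _ _
  have key : ‖y‖ * ‖d‖ ≤ ‖y‖ * ((C + A + 4 * B) * ‖y‖) := by
    nlinarith [mul_le_mul_of_nonneg_left hz hB]
  rw [norm_sub_rev]
  exact le_of_mul_le_mul_left key hy

theorem stmt_19_general {n : ℕ} (C : ℝ) (hC : 0 < C)
    (u : EuclideanSpace ℝ (Fin n) → ℝ)
    (g : EuclideanSpace ℝ (Fin n) → EuclideanSpace ℝ (Fin n))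
    (S : Set (EuclideanSpace ℝ (Fin n)))  -- points where `Du = g` exists
    (hsc : ∀ y ∈ S, ∀ z, u z ≤ u y + ⟪g y, z - y⟫ + C * ‖z - y‖ ^ 2)
    (hup : ∀ y, u y - u 0 - ⟪g 0, y⟫ ≤ C * ‖y‖ ^ 2)
    (hup' : ∀ y, u (-y) - u 0 + ⟪g 0, y⟫ ≤ C * ‖y‖ ^ 2)
    (hsecond : ∀ y, |u y - 2 * u 0 + u (-y)| ≤ C * ‖y‖ ^ 2) :
    ∃ C' > (0:ℝ), ∀ y ∈ S, ‖g y - g 0‖ ≤ C' * ‖y‖ := by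
  refine ⟨10 * C, by positivity, fun y hy => ?_⟩
  by_cases hgy : g y = g 0
  · simp only [hgy, sub_self, norm_zero]
    positivity
  have hy0 : y ≠ 0 := by
    rintro rfl
    exact hgy rfl
  have hlow : ∀ z, u 0 + ⟪g 0, z⟫ - 2 * C * ‖z‖ ^ 2 ≤ u z := fun z => by
    linarith [(abs_le.mp (hsecond z)).1, hup' z]
  calc ‖g y - g 0‖ ≤ (C + C + 4 * (2 * C)) * ‖y‖ :=
        norm_sub_le_mul_norm_of_quadratic_bounds (hsc y hy) (by linarith [hup y]) hlow
          (by positivity) hy0 hgy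
    _ = 10 * C * ‖y‖ := by ring

/-- A semiconcave function satisfying the quadratic second-difference
estimates through the origin has a gradient which is Lipschitz at the origin:
`|Du(y) − Du(0)| ≤ C'|y|` at every point `y` of differentiability. -/
theorem stmt_19 {n : ℕ} (C : ℝ) (hC : 0 < C)
    (u : EuclideanSpace ℝ (Fin n) → ℝ)
    (g : EuclideanSpace ℝ (Fin n) → EuclideanSpace ℝ (Fin n))
    (S : Set (EuclideanSpace ℝ (Fin n)))  -- points where `Du = g` exists
    (h0 : (0 : EuclideanSpace ℝ (Fin n)) ∈ S)
    (hgrad : ∀ y ∈ S, HasGradientAt u (g y) y)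
    (hsc : ∀ y ∈ S, ∀ z, u z ≤ u y + ⟪g y, z - y⟫ + C * ‖z - y‖ ^ 2)
    (hup : ∀ y, u y - u 0 - ⟪g 0, y⟫ ≤ C * ‖y‖ ^ 2)
    (hup' : ∀ y, u (-y) - u 0 + ⟪g 0, y⟫ ≤ C * ‖y‖ ^ 2)
    (hsecond : ∀ y, |u y - 2 * u 0 + u (-y)| ≤ C * ‖y‖ ^ 2) :
    ∃ C' > (0:ℝ), ∀ y ∈ S, ‖g y - g 0‖ ≤ C' * ‖y‖ :=
  stmt_19_general C hC u g S hsc hup hup' hsecond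
end
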